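/- arXiv:1003.4246 — 5 statements merged into one kernel-verified Lean document; each statement's English description precedes it below -/
import Mathlib

section
/- Let V be a complex vector space and let χ_a, χ̄_a : V → V (1 ≤ a ≤ m₁, m₁ ≥ 1 an integer) be linear maps satisfying the canonical anticommutation relations. If λ ∈ ℂ is an eigenvalue of the number operator N = Σ_{a=1}^{m₁} χ̄_a ∘ χ_a (i.e. Nη = λη for some η ≠ 0), then λ is an integer with 0 ≤ λ ≤ m₁. -/
/-- Falling product `N * (N-1) * ... * (N-m)` in a (possibly noncommutative) ring. -/
private def fallP {R : Type*} [Ring R] (N : R) : ℕ → R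
  | 0 => N
  | m + 1 => fallP N m * (N - ((m + 1 : ℕ) : R))

private lemma commute_fallP {R : Type*} [Ring R] {e N : R} (h : Commute e N) :
    ∀ m, Commute e (fallP N m)
  | 0 => h
  | m + 1 => (commute_fallP h m).mul_right (h.sub_right (Nat.commute_cast e (m + 1)))

private lemma fallP_shift {R : Type*} [Ring R] (N : R) :
    ∀ m, fallP (N + 1) (m + 1) = (N + 1) * fallP N m
  | 0 => by simp [fallP]
  | m + 1 => by
    have h : (N + 1) - ((m + 1 + 1 : ℕ) : R) = N - ((m + 1 : ℕ) : R) := by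
      push_cast; abel
    calc fallP (N + 1) (m + 1 + 1)
        = fallP (N + 1) (m + 1) * ((N + 1) - ((m + 1 + 1 : ℕ) : R)) := rfl
      _ = (N + 1) * fallP N m * (N - ((m + 1 : ℕ) : R)) := by rw [fallP_shift N m, h]
      _ = (N + 1) * fallP N (m + 1) := by rw [mul_assoc]; simp only [fallP]

private lemma aux_expand {R : Type*} [Ring R] (A B N c e : R)
    (hA : e * A = A * e) (hB : e * B = B * e) (he : e * e = e) :
    (A + e * (B - A)) * (N - c + e) = A * (N - c) + e * (B * (N + 1 - c) - A * (N - c)) := by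
  have hBA : (B - A) * e = e * (B - A) := by rw [sub_mul, mul_sub, hA, hB]
  calc (A + e * (B - A)) * (N - c + e)
      = A * (N - c) + A * e + e * ((B - A) * (N - c)) + e * ((B - A) * e) := by noncomm_ring
    _ = A * (N - c) + e * A + e * ((B - A) * (N - c)) + e * (e * (B - A)) := by rw [hA, hBA]
    _ = A * (N - c) + e * A + e * ((B - A) * (N - c)) + (e * e) * (B - A) := by
        rw [mul_assoc]
    _ = A * (N - c) + e * A + e * ((B - A) * (N - c)) + e * (B - A) := by rw [he]
    _ = A * (N - c) + e * (B * (N + 1 - c) - A * (N - c)) := by noncomm_ring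

private lemma fallP_add_idem {R : Type*} [Ring R] {e N : R} (he : e * e = e)
    (h : Commute e N) :
    ∀ m, fallP (N + e) m = fallP N m + e * (fallP (N + 1) m - fallP N m)
  | 0 => by simp [fallP]
  | m + 1 => by
    have hA := commute_fallP h m
    have hB := commute_fallP (h.add_right (Commute.one_right e)) m
    have hc : N + e - ((m + 1 : ℕ) : R) = N - ((m + 1 : ℕ) : R) + e := by abel
    simp only [fallP]
    rw [fallP_add_idem he h m, hc]
    exact aux_expand (fallP N m) (fallP (N + 1) m) N ((m + 1 : ℕ) : R) e hA hB he

private lemma key_vanish {R : Type*} [Ring R] {ι : Type*} [DecidableEq ι] (f : ι → R)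
    (s : Finset ι) (hid : ∀ a ∈ s, f a * f a = f a)
    (hcomm : ∀ a ∈ s, ∀ b ∈ s, a ≠ b → f a * f b = f b * f a) :
    fallP (∑ a ∈ s, f a) s.card = 0 := by
  induction s using Finset.induction_on with
  | empty => simp [fallP]
  | @insert a t ha ih =>
    have hcard : (insert a t).card = t.card + 1 := Finset.card_insert_of_notMem ha
    have hsum : ∑ b ∈ insert a t, f b = (∑ b ∈ t, f b) + f a := by
      rw [Finset.sum_insert ha, add_comm]
    have hcomm' : Commute (f a) (∑ b ∈ t, f b) := by
      apply Commute.sum_right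
      intro b hb
      exact hcomm a (Finset.mem_insert_self a t) b (Finset.mem_insert_of_mem hb)
        (fun hh => ha (hh ▸ hb))
    have hIH : fallP (∑ b ∈ t, f b) t.card = 0 :=
      ih (fun b hb => hid b (Finset.mem_insert_of_mem hb))
        (fun b hb c hc hbc => hcomm b (Finset.mem_insert_of_mem hb) c
          (Finset.mem_insert_of_mem hc) hbc)
    have h1 : fallP (∑ b ∈ t, f b) (t.card + 1) = 0 := by
      rw [fallP, hIH, zero_mul]
    have h2 : fallP ((∑ b ∈ t, f b) + 1) (t.card + 1) = 0 := by
      rw [fallP_shift, hIH, mul_zero]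
    rw [hcard, hsum, fallP_add_idem (hid a (Finset.mem_insert_self a t)) hcomm', h1, h2]
    simp

private lemma fallP_complex_eq_prod (lam : ℂ) :
    ∀ m, fallP lam m = ∏ k ∈ Finset.range (m + 1), (lam - (k : ℂ))
  | 0 => by simp [fallP]
  | m + 1 => by
    rw [Finset.prod_range_succ, ← fallP_complex_eq_prod lam m]
    simp only [fallP]

/-- If a family of linear maps `χ_a, χ̄_a : V → V`, `1 ≤ a ≤ m₁`, on a complex
vector space satisfies the canonical anticommutation relations, then any eigenvalue `λ` of the
number operator `N = Σ_a χ̄_a ∘ χ_a` is an integer with `0 ≤ λ ≤ m₁`. -/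
theorem number_operator_eigenvalues {V : Type*} [AddCommGroup V] [Module ℂ V]
    (m₁ : ℕ) (hm₁ : 1 ≤ m₁) (χ χbar : Fin m₁ → (V →ₗ[ℂ] V))
    (hCAR₁ : ∀ i j, χ i ∘ₗ χbar j + χbar j ∘ₗ χ i =
      if i = j then LinearMap.id else 0)
    (hCAR₂ : ∀ i j, χ i ∘ₗ χ j + χ j ∘ₗ χ i = 0)
    (hCAR₃ : ∀ i j, χbar i ∘ₗ χbar j + χbar j ∘ₗ χbar i = 0)
    (lam : ℂ) (η : V) (hη : η ≠ 0)
    (heig : (∑ a, χbar a ∘ₗ χ a) η = lam • η) :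
    ∃ k : ℕ, k ≤ m₁ ∧ lam = (k : ℂ) := by
  have hmul : ∀ f g : V →ₗ[ℂ] V, f ∘ₗ g = f * g := fun f g => rfl
  set n : Fin m₁ → (V →ₗ[ℂ] V) := fun a => χbar a * χ a with hn
  set N : V →ₗ[ℂ] V := ∑ a, n a with hN
  have heig' : N η = lam • η := heig
  -- squares vanish
  have hsq : ∀ a, χ a * χ a = 0 := by
    intro a
    have h := hCAR₂ a a
    rw [hmul] at h
    have h2 : (2 : ℂ) • (χ a * χ a) = 0 := by rw [two_smul]; exact h
    exact (smul_eq_zero.mp h2).resolve_left (by norm_num)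
  have hbarsq : ∀ a, χbar a * χbar a = 0 := by
    intro a
    have h := hCAR₃ a a
    rw [hmul] at h
    have h2 : (2 : ℂ) • (χbar a * χbar a) = 0 := by rw [two_smul]; exact h
    exact (smul_eq_zero.mp h2).resolve_left (by norm_num)
  -- idempotency
  have hid : ∀ a, n a * n a = n a := by
    intro a
    have h := hCAR₁ a a
    rw [if_pos rfl, hmul, hmul] at h
    have h1 : χ a * χbar a = 1 - χbar a * χ a := eq_sub_of_add_eq h
    calc n a * n a = χbar a * ((χ a * χbar a) * χ a) := by simp only [hn]; noncomm_ring
      _ = χbar a * ((1 - χbar a * χ a) * χ a) := by rw [h1]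
      _ = χbar a * χ a - χbar a * (χbar a * (χ a * χ a)) := by noncomm_ring
      _ = n a := by rw [hsq a, mul_zero, mul_zero, sub_zero]
  -- commutation
  have hcomm : ∀ a b : Fin m₁, a ≠ b → n a * n b = n b * n a := by
    intro a b hab
    have q1 := hCAR₁ a b
    rw [if_neg hab, hmul, hmul] at q1
    have p1 : χ a * χbar b = -(χbar b * χ a) := eq_neg_of_add_eq_zero_left q1
    have q2 := hCAR₃ a b
    rw [hmul, hmul] at q2
    have p2 : χbar a * χbar b = -(χbar b * χbar a) := eq_neg_of_add_eq_zero_left q2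
    have q3 := hCAR₂ a b
    rw [hmul, hmul] at q3
    have p3 : χ a * χ b = -(χ b * χ a) := eq_neg_of_add_eq_zero_left q3
    have q4 := hCAR₁ b a
    rw [if_neg (Ne.symm hab), hmul, hmul] at q4
    have p4 : χbar a * χ b = -(χ b * χbar a) := eq_neg_of_add_eq_zero_right q4
    calc n a * n b = χbar a * ((χ a * χbar b) * χ b) := by simp only [hn]; noncomm_ring
      _ = χbar a * (-(χbar b * χ a) * χ b) := by rw [p1]
      _ = -((χbar a * χbar b) * (χ a * χ b)) := by noncomm_ring
      _ = -((-(χbar b * χbar a)) * (-(χ b * χ a))) := by rw [p2, p3]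
      _ = -(χbar b * ((χbar a * χ b) * χ a)) := by noncomm_ring
      _ = -(χbar b * ((-(χ b * χbar a)) * χ a)) := by rw [p4]
      _ = n b * n a := by simp only [hn]; noncomm_ring
  -- the falling product of N vanishes
  have hvanish : fallP N m₁ = 0 := by
    have h := key_vanish n Finset.univ (fun a _ => hid a)
      (fun a _ b _ hab => hcomm a b hab)
    rwa [Finset.card_univ, Fintype.card_fin] at h
  -- evaluate on the eigenvector
  have happ : ∀ m, (fallP N m) η = (fallP lam m) • η := by
    intro m
    induction m with
    | zero => exact heig'
    | succ m ih =>
      show (fallP N m * (N - ((m + 1 : ℕ) : V →ₗ[ℂ] V))) η = _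
      rw [Module.End.mul_apply, LinearMap.sub_apply, heig', Module.End.natCast_apply,
        ← Nat.cast_smul_eq_nsmul ℂ, ← sub_smul, map_smul, ih, smul_smul]
      show _ = (fallP lam m * (lam - ((m + 1 : ℕ) : ℂ))) • η
      rw [mul_comm]
  have hzero : fallP lam m₁ = 0 := by
    have h := happ m₁
    rw [hvanish] at h
    have : (fallP lam m₁) • η = 0 := by simpa using h.symm
    exact (smul_eq_zero.mp this).resolve_right hη
  rw [fallP_complex_eq_prod] at hzero
  obtain ⟨k, hk, hk0⟩ := Finset.prod_eq_zero_iff.mp hzero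
  exact ⟨k, Nat.lt_succ_iff.mp (Finset.mem_range.mp hk), sub_eq_zero.mp hk0⟩
end

section
/- Let V be a complex vector space and let χ_{k,a}, χ̄_{k,a} (1 ≤ a ≤ m₁) and χ_{n,b}, χ̄_{n,b} (1 ≤ b ≤ m₂) be linear maps of V such that the combined family (over all m₁ + m₂ index pairs) satisfies the canonical anticommutation relations. If λ ∈ ℂ is an eigenvalue of the operator l = Σ_{a=1}^{m₁} χ̄_{k,a} ∘ χ_{k,a} − Σ_{b=1}^{m₂} χ̄_{n,b} ∘ χ_{n,b}, then λ is an integer with −m₂ ≤ λ ≤ m₁. -/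
/-- Key lemma: if `l = ∑ ε i • p i` over a finite family of pairwise commuting idempotents,
then any eigenvalue of `l` is a subset-sum of the `ε i`. -/
lemma key_idem_eigen {V : Type*} [AddCommGroup V] [Module ℂ V] {ι : Type*} [DecidableEq ι]
    (ε : ι → ℤ) (p : ι → (V →ₗ[ℂ] V)) (s : Finset ι)
    (hp : ∀ i ∈ s, p i ∘ₗ p i = p i)
    (hc : ∀ i ∈ s, ∀ j ∈ s, p i ∘ₗ p j = p j ∘ₗ p i)
    (lam : ℂ) (η : V) (hη : η ≠ 0)
    (h : (∑ i ∈ s, (ε i : ℂ) • p i) η = lam • η) :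
    ∃ t : Finset ι, t ⊆ s ∧ lam = ∑ i ∈ t, (ε i : ℂ) := by
  induction s using Finset.induction_on generalizing lam η with
  | empty =>
      refine ⟨∅, Finset.Subset.refl _, ?_⟩
      simp only [Finset.sum_empty, LinearMap.zero_apply] at h
      rcases (smul_eq_zero.mp h.symm) with h' | h'
      · simp [h']
      · exact absurd h' hη
  | @insert a s ha ih =>
      have hmem : ∀ i ∈ s, i ∈ insert a s := fun i hi => Finset.mem_insert_of_mem hi
      have hamem : a ∈ insert a s := Finset.mem_insert_self a s
      set L : V →ₗ[ℂ] V := ∑ i ∈ insert a s, (ε i : ℂ) • p i with hL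
      by_cases hpa : p a η = 0
      · -- then L η = (∑ over s) η, apply IH directly
        have hsum : (∑ i ∈ s, (ε i : ℂ) • p i) η = lam • η := by
          have := h
          rw [hL, Finset.sum_insert ha] at this
          simpa [hpa] using this
        obtain ⟨t, hts, hlam⟩ := ih (fun i hi => hp i (hmem i hi))
          (fun i hi j hj => hc i (hmem i hi) j (hmem j hj)) lam η hη hsum
        exact ⟨t, hts.trans (Finset.subset_insert a s), hlam⟩
      · -- use η₁ = p a η as eigenvector of ∑ over s with eigenvalue lam - ε a
        have hcomm : L (p a η) = p a (L η) := by
          rw [hL]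
          simp only [LinearMap.sum_apply, LinearMap.smul_apply, map_sum, map_smul]
          refine Finset.sum_congr rfl fun i hi => ?_
          congr 1
          rw [← LinearMap.comp_apply, ← LinearMap.comp_apply,
            hc i hi a hamem]
        have hLpa : L (p a η) = lam • (p a η) := by
          rw [hcomm, h, map_smul]
        have hidem : p a (p a η) = p a η := by
          rw [← LinearMap.comp_apply, hp a hamem]
        have hsum : (∑ i ∈ s, (ε i : ℂ) • p i) (p a η) = (lam - (ε a : ℂ)) • (p a η) := by
          have h2 : ((ε a : ℂ) • p a) (p a η) + (∑ i ∈ s, (ε i : ℂ) • p i) (p a η)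
              = lam • (p a η) := by
            rw [← LinearMap.add_apply, ← hLpa, hL, Finset.sum_insert ha]
          have h3 : ((ε a : ℂ) • p a) (p a η) = (ε a : ℂ) • (p a η) := by
            simp [hidem]
          rw [h3] at h2
          rw [sub_smul]
          linear_combination (norm := module) h2
        obtain ⟨t, hts, hlam⟩ := ih (fun i hi => hp i (hmem i hi))
          (fun i hi j hj => hc i (hmem i hi) j (hmem j hj)) (lam - (ε a : ℂ)) (p a η) hpa hsum
        refine ⟨insert a t, Finset.insert_subset_insert a hts, ?_⟩
        rw [Finset.sum_insert (fun hat => ha (hts hat))]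
        rw [← hlam]; ring

/-- If the combined family of maps `χ_{k,a}, χ̄_{k,a}` (`1 ≤ a ≤ m₁`, indexed by
`Sum.inl`) and `χ_{n,b}, χ̄_{n,b}` (`1 ≤ b ≤ m₂`, indexed by `Sum.inr`) on a complex vector
space satisfies the canonical anticommutation relations, then any eigenvalue `λ` of
`l = Σ_a χ̄_{k,a}∘χ_{k,a} − Σ_b χ̄_{n,b}∘χ_{n,b}` is an integer with `−m₂ ≤ λ ≤ m₁`. -/
theorem difference_number_operator_eigenvalues {V : Type*} [AddCommGroup V] [Module ℂ V]
    (m₁ m₂ : ℕ) (χ χbar : Fin m₁ ⊕ Fin m₂ → (V →ₗ[ℂ] V))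
    (hCAR₁ : ∀ i j, χ i ∘ₗ χbar j + χbar j ∘ₗ χ i =
      if i = j then LinearMap.id else 0)
    (hCAR₂ : ∀ i j, χ i ∘ₗ χ j + χ j ∘ₗ χ i = 0)
    (hCAR₃ : ∀ i j, χbar i ∘ₗ χbar j + χbar j ∘ₗ χbar i = 0)
    (lam : ℂ) (η : V) (hη : η ≠ 0)
    (heig : ((∑ a : Fin m₁, χbar (Sum.inl a) ∘ₗ χ (Sum.inl a)) -
      (∑ b : Fin m₂, χbar (Sum.inr b) ∘ₗ χ (Sum.inr b))) η = lam • η) :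
    ∃ z : ℤ, -(m₂ : ℤ) ≤ z ∧ z ≤ (m₁ : ℤ) ∧ lam = (z : ℂ) := by
  let ι := Fin m₁ ⊕ Fin m₂
  -- translate CAR to multiplicative form
  have mul_eq : ∀ f g : V →ₗ[ℂ] V, f * g = f ∘ₗ g := fun f g => rfl
  have h1 : ∀ i : ι, χ i * χbar i = 1 - χbar i * χ i := by
    intro i
    have := hCAR₁ i i
    rw [if_pos rfl] at this
    rw [mul_eq, mul_eq, eq_sub_iff_add_eq]
    exact this
  have h1' : ∀ i j : ι, i ≠ j → χ i * χbar j = -(χbar j * χ i) := by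
    intro i j hij
    have := hCAR₁ i j
    rw [if_neg hij] at this
    rw [mul_eq, mul_eq, eq_neg_iff_add_eq_zero]
    exact this
  have h2 : ∀ i j : ι, χ i * χ j = -(χ j * χ i) := by
    intro i j
    rw [mul_eq, mul_eq, eq_neg_iff_add_eq_zero]
    exact hCAR₂ i j
  have h3 : ∀ i j : ι, χbar i * χbar j = -(χbar j * χbar i) := by
    intro i j
    rw [mul_eq, mul_eq, eq_neg_iff_add_eq_zero]
    exact hCAR₃ i j
  have hbar0 : ∀ i : ι, χbar i * χbar i = 0 := by
    intro i
    have := h3 i i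
    have h' : (2:ℂ) • (χbar i * χbar i) = 0 := by
      rw [two_smul]
      nth_rewrite 1 [this]
      simp
    simpa using (smul_eq_zero.mp h').resolve_left (by norm_num)
  set p : ι → (V →ₗ[ℂ] V) := fun i => χbar i ∘ₗ χ i with hpdef
  have hpmul : ∀ i, p i = χbar i * χ i := fun i => rfl
  -- idempotence
  have hidem : ∀ i : ι, p i ∘ₗ p i = p i := by
    intro i
    rw [← mul_eq, hpmul]
    calc (χbar i * χ i) * (χbar i * χ i)
        = χbar i * (χ i * χbar i) * χ i := by noncomm_ring
      _ = χbar i * (1 - χbar i * χ i) * χ i := by rw [h1 i]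
      _ = χbar i * χ i - (χbar i * χbar i) * (χ i * χ i) := by noncomm_ring
      _ = χbar i * χ i := by rw [hbar0]; simp
  -- commutation
  have hcomm : ∀ i j : ι, p i ∘ₗ p j = p j ∘ₗ p i := by
    intro i j
    rcases eq_or_ne i j with rfl | hij
    · rfl
    · have e4 : χbar i * χ j = -(χ j * χbar i) := by
        rw [h1' j i hij.symm, neg_neg]
      rw [← mul_eq, ← mul_eq, hpmul, hpmul]
      calc (χbar i * χ i) * (χbar j * χ j)
          = χbar i * (χ i * χbar j) * χ j := by noncomm_ring
        _ = χbar i * (-(χbar j * χ i)) * χ j := by rw [h1' i j hij]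
        _ = -((χbar i * χbar j) * (χ i * χ j)) := by noncomm_ring
        _ = -((-(χbar j * χbar i)) * (-(χ j * χ i))) := by rw [h3 i j, h2 i j]
        _ = -(χbar j * (χbar i * χ j) * χ i) := by noncomm_ring
        _ = -(χbar j * (-(χ j * χbar i)) * χ i) := by rw [e4]
        _ = (χbar j * χ j) * (χbar i * χ i) := by noncomm_ring
  set ε : ι → ℤ := Sum.elim (fun _ => 1) (fun _ => -1) with hε
  have hop : (∑ i : ι, (ε i : ℂ) • p i) η = lam • η := by
    rw [show (∑ i : ι, (ε i : ℂ) • p i) =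
        ((∑ a : Fin m₁, χbar (Sum.inl a) ∘ₗ χ (Sum.inl a)) -
          (∑ b : Fin m₂, χbar (Sum.inr b) ∘ₗ χ (Sum.inr b))) from ?_]
    · exact heig
    · rw [Fintype.sum_sum_type]
      simp [hε, hpdef, sub_eq_add_neg, ← Finset.sum_neg_distrib]
  obtain ⟨t, -, hlam⟩ := key_idem_eigen ε p Finset.univ
    (fun i _ => hidem i) (fun i _ j _ => hcomm i j) lam η hη hop
  refine ⟨∑ i ∈ t, ε i, ?_, ?_, by rw [hlam]; push_cast; rfl⟩
  · -- lower bound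
    calc -(m₂ : ℤ) = -(∑ i : ι, (if i.isRight then (1:ℤ) else 0)) := by
          rw [Fintype.sum_sum_type]; simp
      _ ≤ -(∑ i ∈ t, (if i.isRight then (1:ℤ) else 0)) := by
          apply neg_le_neg
          exact Finset.sum_le_sum_of_subset_of_nonneg (Finset.subset_univ t)
            (by intros; split <;> simp)
      _ = ∑ i ∈ t, -(if i.isRight then (1:ℤ) else 0) := by
          rw [Finset.sum_neg_distrib]
      _ ≤ ∑ i ∈ t, ε i := by
          apply Finset.sum_le_sum
          intro i _
          cases i <;> simp [hε]
  · calc ∑ i ∈ t, ε i ≤ ∑ i ∈ t, (if i.isLeft then (1:ℤ) else 0) := by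
          apply Finset.sum_le_sum
          intro i _
          cases i <;> simp [hε]
      _ ≤ ∑ i : ι, (if i.isLeft then (1:ℤ) else 0) :=
          Finset.sum_le_sum_of_subset_of_nonneg (Finset.subset_univ t)
            (by intros; split <;> simp)
      _ = (m₁ : ℤ) := by rw [Fintype.sum_sum_type]; simp
end

section
/- In the CAR setting with vacuum: (i) if σ ∈ ℂ and there exists η ≠ 0 with L_k η = σ η for all 1 ≤ k < n, then σ is an integer with −4 ≤ σ ≤ 4; (ii) conversely, for every integer σ with −4 ≤ σ ≤ 4 there exists a unit vector η ∈ V with L_k η = σ η for all 1 ≤ k < n; (iii) if η and η′ are joint eigenvectors as in (i) belonging to distinct values σ ≠ σ′, then ⟨η, η′⟩ = 0. -/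
/-!
The number operators `χ̄ₚ χₚ` of the modes `p = (k, a)` are pairwise commuting idempotents. Splitting
an eigenvector of `∑ cᵢ Pᵢ` (commuting idempotents `Pᵢ`) along one `Pᵢ` at a time shows that every
eigenvalue is a subset sum of the `cᵢ`; for `L_k` these are four coefficients `+1` and four `-1`.
Conversely, creation operators applied to the vacuum for a chosen set of modes give unit vectors on
which every number operator acts by `0` or `1`, realising each integer in `[-4, 4]`. Finally each
`L_k` is symmetric, so joint eigenvectors for distinct eigenvalues are orthogonal.
-/

open Finset

namespace Module.End

variable {K M : Type*} [Field K] [AddCommGroup M] [Module K M]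

theorem exists_subset_eq_sum_of_hasEigenvalue_sum_smul {ι : Type*} {P : ι → Module.End K M}
    (hP : ∀ i, IsIdempotentElem (P i)) (hPP : ∀ i j, Commute (P i) (P j)) (c : ι → K)
    (s : Finset ι) {σ : K} (hσ : (∑ i ∈ s, c i • P i).HasEigenvalue σ) :
    ∃ t ⊆ s, σ = ∑ i ∈ t, c i := by
  classical
  induction s using Finset.induction_on generalizing σ with
  | empty =>
    obtain ⟨v, hv, hv0⟩ := hσ.exists_hasEigenvector
    rw [sum_empty, mem_eigenspace_iff, LinearMap.zero_apply, eq_comm, smul_eq_zero] at hv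
    exact ⟨∅, empty_subset _, by simpa using hv.resolve_right hv0⟩
  | insert j s hj ih =>
    obtain ⟨v, hv, hv0⟩ := hσ.exists_hasEigenvector
    rw [sum_insert hj, mem_eigenspace_iff] at hv
    set A := ∑ i ∈ s, c i • P i
    have hAP : Commute A (P j) := Commute.sum_left _ _ _ fun i _ => (hPP i j).smul_left _
    by_cases hPv : P j v = 0
    · have hAv : A v = σ • v := by simpa [hPv] using hv
      obtain ⟨t, hts, ht⟩ := ih (hasEigenvalue_of_hasEigenvector ⟨mem_eigenspace_iff.2 hAv, hv0⟩)
      exact ⟨t, hts.trans (subset_insert _ _), ht⟩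
    · -- `P j v` is an eigenvector of `A` for `σ - c j`
      have hAPv : A (P j v) = (σ - c j) • P j v := by
        have h := congr(P j $hv)
        simp only [LinearMap.add_apply, LinearMap.smul_apply, map_add, map_smul] at h
        rw [← mul_apply (P j), (hP j).eq, ← mul_apply (P j), ← hAP.eq, mul_apply] at h
        rw [sub_smul]
        exact eq_sub_of_add_eq' h
      obtain ⟨t, hts, ht⟩ :=
        ih (hasEigenvalue_of_hasEigenvector ⟨mem_eigenspace_iff.2 hAPv, hPv⟩)
      refine ⟨insert j t, insert_subset_insert _ hts, ?_⟩
      rw [sum_insert fun hjt => hj (hts hjt), ← ht]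
      ring

theorem exists_int_eq_of_hasEigenvalue_sum_sub_sum {ι : Type*} {N : ι → Module.End K M}
    (hN : ∀ i, IsIdempotentElem (N i)) (hNN : ∀ i j, Commute (N i) (N j)) (s s' : Finset ι)
    {σ : K} (hσ : (∑ i ∈ s, N i - ∑ i ∈ s', N i).HasEigenvalue σ) :
    ∃ z : ℤ, -(#s' : ℤ) ≤ z ∧ z ≤ #s ∧ σ = z := by
  let c : ι ⊕ ι → K := Sum.elim 1 (-1)
  have hsum : ∑ i ∈ s.disjSum s', c i • Sum.elim N N i = ∑ i ∈ s, N i - ∑ i ∈ s', N i := by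
    simp [c, sum_disjSum, sub_eq_add_neg]
  obtain ⟨t, hts, ht⟩ := exists_subset_eq_sum_of_hasEigenvalue_sum_smul
    (P := Sum.elim N N) (by simp [hN]) (by simp [hNN]) c (s.disjSum s') (hsum ▸ hσ)
  obtain ⟨hl, hr⟩ := subset_disjSum.1 hts
  refine ⟨#t.toLeft - #t.toRight, ?_, ?_, ?_⟩
  · have := card_le_card hr
    omega
  · have := card_le_card hl
    omega
  · rw [ht, ← toLeft_disjSum_toRight (u := t), sum_disjSum]
    simp [c, sub_eq_add_neg]

end Module.End

/-- Canonical anticommutation relations for annihilators `c p` and creators `cbar p`. -/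
structure IsCAR {A I : Type*} [Ring A] [DecidableEq I] (c cbar : I → A) : Prop where
  anticomm_c_cbar : ∀ p q, c p * cbar q + cbar q * c p = if p = q then 1 else 0
  anticomm_c_c : ∀ p q, c p * c q + c q * c p = 0
  anticomm_cbar_cbar : ∀ p q, cbar p * cbar q + cbar q * cbar p = 0

namespace IsCAR

variable {A I : Type*} [Ring A] [DecidableEq I] {c cbar : I → A}

theorem c_mul_cbar_self (h : IsCAR c cbar) (p : I) : c p * cbar p = 1 - cbar p * c p :=
  eq_sub_of_add_eq (by simpa using h.anticomm_c_cbar p p)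

theorem c_mul_cbar_of_ne (h : IsCAR c cbar) {p q : I} (hpq : p ≠ q) :
    c p * cbar q = -(cbar q * c p) :=
  eq_neg_of_add_eq_zero_left (by simpa [hpq] using h.anticomm_c_cbar p q)

theorem cbar_mul_c_of_ne (h : IsCAR c cbar) {p q : I} (hpq : p ≠ q) :
    cbar p * c q = -(c q * cbar p) :=
  eq_neg_of_add_eq_zero_right (by simpa [hpq.symm] using h.anticomm_c_cbar q p)

theorem c_mul_self {K : Type*} [Field K] [CharZero K] [Algebra K A] (h : IsCAR c cbar) (p : I) :
    c p * c p = 0 := by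
  have h2 : (2 : K) • (c p * c p) = 0 := by rw [two_smul]; exact h.anticomm_c_c p p
  simpa using h2

theorem isIdempotentElem_number {K : Type*} [Field K] [CharZero K] [Algebra K A]
    (h : IsCAR c cbar) (p : I) : IsIdempotentElem (cbar p * c p) := by
  calc cbar p * c p * (cbar p * c p) = cbar p * (c p * cbar p) * c p := by noncomm_ring
    _ = cbar p * c p - cbar p * cbar p * (c p * c p) := by
      rw [h.c_mul_cbar_self]; noncomm_ring
    _ = cbar p * c p := by rw [h.c_mul_self (K := K), mul_zero, sub_zero]

theorem commute_number_c (h : IsCAR c cbar) {p q : I} (hpq : p ≠ q) :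
    Commute (cbar p * c p) (c q) := by
  have hcc : c p * c q = -(c q * c p) := eq_neg_of_add_eq_zero_left (h.anticomm_c_c p q)
  calc cbar p * c p * c q = -(cbar p * c q * c p) := by rw [mul_assoc, hcc]; noncomm_ring
    _ = c q * (cbar p * c p) := by rw [h.cbar_mul_c_of_ne hpq]; noncomm_ring

theorem commute_number_cbar (h : IsCAR c cbar) {p q : I} (hpq : p ≠ q) :
    Commute (cbar p * c p) (cbar q) := by
  have hdd : cbar p * cbar q = -(cbar q * cbar p) :=
    eq_neg_of_add_eq_zero_left (h.anticomm_cbar_cbar p q)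
  calc cbar p * c p * cbar q = -(cbar p * cbar q * c p) := by
        rw [mul_assoc, h.c_mul_cbar_of_ne hpq]; noncomm_ring
    _ = cbar q * (cbar p * c p) := by rw [hdd]; noncomm_ring

theorem commute_number (h : IsCAR c cbar) (p q : I) :
    Commute (cbar p * c p) (cbar q * c q) := by
  obtain rfl | hpq := eq_or_ne p q
  · exact Commute.refl _
  · exact (h.commute_number_cbar hpq).mul_right (h.commute_number_c hpq)

section InnerProductSpace

variable {𝕜 E : Type*} [RCLike 𝕜] [NormedAddCommGroup E] [InnerProductSpace 𝕜 E]
  {c cbar : I → Module.End 𝕜 E}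

theorem exists_fock_state (h : IsCAR c cbar)
    (hadj : ∀ p u v, (inner 𝕜 (cbar p u) v : 𝕜) = inner 𝕜 u (c p v))
    {η₀ : E} (hη₀ : ‖η₀‖ = 1) (hvac : ∀ p, c p η₀ = 0) (S : Finset I) :
    ∃ v : E, ‖v‖ = 1 ∧ ∀ p, (cbar p * c p) v = (if p ∈ S then 1 else 0 : 𝕜) • v := by
  induction S using Finset.induction_on with
  | empty => exact ⟨η₀, hη₀, fun p => by simp [hvac]⟩
  | insert q S hq ih =>
    obtain ⟨v, hv, hNv⟩ := ih
    have hcv : c q v = 0 := by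
      rw [← inner_self_eq_zero (𝕜 := 𝕜), ← hadj, ← Module.End.mul_apply, hNv q, if_neg hq,
        zero_smul, inner_zero_left]
    have hccbar : c q (cbar q v) = v := by
      rw [← Module.End.mul_apply, h.c_mul_cbar_self]
      simp [hcv]
    refine ⟨cbar q v, ?_, fun p => ?_⟩
    · have hinner : (inner 𝕜 (cbar q v) (cbar q v) : 𝕜) = inner 𝕜 v v := by rw [hadj, hccbar]
      rw [norm_eq_sqrt_re_inner (𝕜 := 𝕜), hinner, ← norm_eq_sqrt_re_inner, hv]
    · obtain rfl | hpq := eq_or_ne p q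
      · simp [hccbar]
      · rw [← Module.End.mul_apply, (h.commute_number_cbar hpq).eq, Module.End.mul_apply, hNv,
          map_smul]
        simp [hpq]

end InnerProductSpace

end IsCAR

theorem LinearMap.isSymmetric_mul_of_formal_adjoint {𝕜 E : Type*} [RCLike 𝕜]
    [NormedAddCommGroup E] [InnerProductSpace 𝕜 E] {S T : E →ₗ[𝕜] E}
    (h : ∀ u v, (inner 𝕜 (S u) v : 𝕜) = inner 𝕜 u (T v)) : (S * T).IsSymmetric := fun u v => by
  rw [Module.End.mul_apply, Module.End.mul_apply, h, ← inner_conj_symm u, h, inner_conj_symm]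

/-- Modes are pairs `(k, a)` of a site `k` and an internal index `a`, so that
`L_k = siteNumber c cbar k - siteNumber c cbar n`. -/
def siteNumber {A κ α : Type*} [Ring A] [Fintype α] (c cbar : κ × α → A) (k : κ) : A :=
  ∑ a, cbar (k, a) * c (k, a)

section siteNumber

variable {κ α : Type*} [Fintype α]

theorem isSymmetric_siteNumber {𝕜 E : Type*} [RCLike 𝕜] [NormedAddCommGroup E]
    [InnerProductSpace 𝕜 E] {c cbar : κ × α → Module.End 𝕜 E}
    (hadj : ∀ p u v, (inner 𝕜 (cbar p u) v : 𝕜) = inner 𝕜 u (c p v)) (k : κ) :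
    (siteNumber c cbar k).IsSymmetric :=
  LinearMap.isSymmetric_sum _ fun _ _ => LinearMap.isSymmetric_mul_of_formal_adjoint (hadj _)

variable [DecidableEq κ] [DecidableEq α]

theorem IsCAR.exists_int_of_hasEigenvalue_siteNumber_sub {K M : Type*} [Field K] [CharZero K]
    [AddCommGroup M] [Module K M] {c cbar : κ × α → Module.End K M} (h : IsCAR c cbar)
    (k k' : κ) {σ : K} (hσ : (siteNumber c cbar k - siteNumber c cbar k').HasEigenvalue σ) :
    ∃ z : ℤ, -(Fintype.card α : ℤ) ≤ z ∧ z ≤ Fintype.card α ∧ σ = z := by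
  have hsite : ∀ k, siteNumber c cbar k = ∑ p ∈ univ.map (.sectR k α), cbar p * c p := by
    simp [siteNumber]
  rw [hsite, hsite] at hσ
  simpa using Module.End.exists_int_eq_of_hasEigenvalue_sum_sub_sum
    (h.isIdempotentElem_number (K := K)) h.commute_number _ _ hσ

variable {𝕜 E : Type*} [RCLike 𝕜] [NormedAddCommGroup E] [InnerProductSpace 𝕜 E]
  {c cbar : κ × α → Module.End 𝕜 E}

theorem IsCAR.exists_siteNumber_sub_eigenvector [Fintype κ] (h : IsCAR c cbar)
    (hadj : ∀ p u v, (inner 𝕜 (cbar p u) v : 𝕜) = inner 𝕜 u (c p v))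
    {η₀ : E} (hη₀ : ‖η₀‖ = 1) (hvac : ∀ p, c p η₀ = 0) (k' : κ) (z : ℤ)
    (hz : -(Fintype.card α : ℤ) ≤ z) (hz' : z ≤ Fintype.card α) :
    ∃ v : E, ‖v‖ = 1 ∧ ∀ k ≠ k', (siteNumber c cbar k - siteNumber c cbar k') v = (z : 𝕜) • v := by
  obtain ⟨A, -, hA⟩ := (univ : Finset α).exists_subset_card_eq (n := z.toNat) (by simp; omega)
  obtain ⟨B, -, hB⟩ := (univ : Finset α).exists_subset_card_eq (n := (-z).toNat) (by simp; omega)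
  -- occupy the internal modes `A` at every site other than `k'`, and `B` at `k'`
  obtain ⟨v, hv, hNv⟩ := h.exists_fock_state hadj hη₀ hvac
    {p | p.2 ∈ if p.1 = k' then B else A}
  have hsite : ∀ k, siteNumber c cbar k v = (#(if k = k' then B else A) : 𝕜) • v := by
    intro k
    simp only [siteNumber, LinearMap.sum_apply, hNv, ← sum_smul, mem_filter, mem_univ, true_and,
      sum_boole]
    split_ifs <;> simp
  refine ⟨v, hv, fun k hk => ?_⟩
  rw [LinearMap.sub_apply, hsite, hsite, if_neg hk, if_pos rfl, ← sub_smul, hA, hB]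
  congr 1
  exact_mod_cast Int.toNat_sub_toNat_neg z

end siteNumber

/-- In the CAR setting with vacuum for `χᵏ_a : V → V` (`1 ≤ k ≤ n`, `1 ≤ a ≤ 4`),
with `L_k = Σ_a χ̄ᵏ_a∘χᵏ_a − Σ_a χ̄ⁿ_a∘χⁿ_a` for `1 ≤ k < n`:
(i) any joint eigenvalue `σ` of all the `L_k` is an integer with `−4 ≤ σ ≤ 4`;
(ii) every integer `σ` with `−4 ≤ σ ≤ 4` is realised by a joint unit eigenvector;
(iii) joint eigenvectors belonging to distinct values are orthogonal. -/
theorem eigenvalues_of_Lk {V : Type*} [NormedAddCommGroup V] [InnerProductSpace ℂ V]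
    (n : ℕ) (hn : 2 ≤ n) (χ χbar : Fin n → Fin 4 → (V →ₗ[ℂ] V))
    (hadj : ∀ k a (u v : V), (inner ℂ (χbar k a u) v : ℂ) = inner ℂ u (χ k a v))
    (hCAR₁ : ∀ k m a b, χ k a ∘ₗ χbar m b + χbar m b ∘ₗ χ k a =
      if k = m ∧ a = b then LinearMap.id else 0)
    (hCAR₂ : ∀ k m a b, χ k a ∘ₗ χ m b + χ m b ∘ₗ χ k a = 0)
    (hCAR₃ : ∀ k m a b, χbar k a ∘ₗ χbar m b + χbar m b ∘ₗ χbar k a = 0)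
    (η₀ : V) (hη₀ : ‖η₀‖ = 1) (hvac : ∀ k a, χ k a η₀ = 0) :
    -- (i)
    (∀ (σ : ℂ) (η : V), η ≠ 0 →
      (∀ k : Fin n, (k : ℕ) < n - 1 →
        ((∑ a, χbar k a ∘ₗ χ k a) -
         (∑ a, χbar ⟨n - 1, by omega⟩ a ∘ₗ χ ⟨n - 1, by omega⟩ a)) η = σ • η) →
      ∃ z : ℤ, -4 ≤ z ∧ z ≤ 4 ∧ σ = (z : ℂ)) ∧
    -- (ii)
    (∀ z : ℤ, -4 ≤ z → z ≤ 4 → ∃ η : V, ‖η‖ = 1 ∧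
      ∀ k : Fin n, (k : ℕ) < n - 1 →
        ((∑ a, χbar k a ∘ₗ χ k a) -
         (∑ a, χbar ⟨n - 1, by omega⟩ a ∘ₗ χ ⟨n - 1, by omega⟩ a)) η = (z : ℂ) • η) ∧
    -- (iii)
    (∀ (σ σ' : ℂ) (η η' : V), η ≠ 0 → η' ≠ 0 →
      (∀ k : Fin n, (k : ℕ) < n - 1 →
        ((∑ a, χbar k a ∘ₗ χ k a) -
         (∑ a, χbar ⟨n - 1, by omega⟩ a ∘ₗ χ ⟨n - 1, by omega⟩ a)) η = σ • η) →
      (∀ k : Fin n, (k : ℕ) < n - 1 →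
        ((∑ a, χbar k a ∘ₗ χ k a) -
         (∑ a, χbar ⟨n - 1, by omega⟩ a ∘ₗ χ ⟨n - 1, by omega⟩ a)) η' = σ' • η') →
      σ ≠ σ' → (inner ℂ η η' : ℂ) = 0) := by
  let kₙ : Fin n := ⟨n - 1, by omega⟩
  let k₀ : Fin n := ⟨0, by omega⟩
  have hk₀ : (k₀ : ℕ) < n - 1 := by simp only [k₀]; omega
  have hne : ∀ k : Fin n, (k : ℕ) < n - 1 → k ≠ kₙ := fun k hk h => by simp [h, kₙ] at hk
  let c : Fin n × Fin 4 → Module.End ℂ V := fun p => χ p.1 p.2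
  let cbar : Fin n × Fin 4 → Module.End ℂ V := fun p => χbar p.1 p.2
  have hCAR : IsCAR c cbar := by
    refine ⟨fun p q => ?_, fun p q => hCAR₂ p.1 q.1 p.2 q.2, fun p q => hCAR₃ p.1 q.1 p.2 q.2⟩
    simpa [c, cbar, Module.End.mul_eq_comp, Module.End.one_eq_id, Prod.ext_iff] using
      hCAR₁ p.1 q.1 p.2 q.2
  have hadj' : ∀ p u v, (inner ℂ (cbar p u) v : ℂ) = inner ℂ u (c p v) := fun p => hadj p.1 p.2
  refine ⟨fun σ η hη hσ => ?_, fun z hz hz' => ?_, fun σ σ' η η' _ _ hσ hσ' hσσ' => ?_⟩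
  · obtain ⟨z, hz, hz', rfl⟩ := hCAR.exists_int_of_hasEigenvalue_siteNumber_sub k₀ kₙ
      (Module.End.hasEigenvalue_of_hasEigenvector
        ⟨Module.End.mem_eigenspace_iff.2 (hσ k₀ hk₀), hη⟩)
    exact ⟨z, by simpa using hz, by simpa using hz', rfl⟩
  · obtain ⟨v, hv, hLv⟩ := hCAR.exists_siteNumber_sub_eigenvector hadj' hη₀
      (fun p => hvac p.1 p.2) kₙ z (by simpa using hz) (by simpa using hz')
    exact ⟨v, hv, fun k hk => hLv k (hne k hk)⟩
  · have hL := (isSymmetric_siteNumber hadj' k₀).sub (isSymmetric_siteNumber hadj' kₙ)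
    exact hL.orthogonalFamily_eigenspaces hσσ' ⟨η, Module.End.mem_eigenspace_iff.2 (hσ k₀ hk₀)⟩
      ⟨η', Module.End.mem_eigenspace_iff.2 (hσ' k₀ hk₀)⟩
end

section
/- Fix p ∈ ℝ. If (u_k) is a sequence in C_c^∞(ℝ,ℂ) with sup_k ‖u_k‖₁ < ∞ which converges weakly to 0 in the weighted space L²(ℝ, e^{(p+2)t} dt) (i.e. ∫_ℝ u_k(t) v̄(t) e^{(p+2)t} dt → 0 for every v ∈ L²(ℝ, e^{(p+2)t} dt)), then ‖u_k‖ → 0. In other words, the norm ‖·‖ is compact relative to the norm ‖·‖₁. -/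
open MeasureTheory Filter Real


lemma integral_hasDerivAt_eq_zero {g g' : ℝ → ℝ} (hg : ∀ t, HasDerivAt g (g' t) t)
    (hc : Continuous g') (hs : HasCompactSupport g) : (∫ t, g' t) = 0 := by
  have hderiv : deriv g = g' := funext fun t => (hg t).deriv
  obtain ⟨r, hr⟩ := hs.isBounded.subset_closedBall 0
  set R : ℝ := max r 0 + 1 with hR
  have hrR : r < R := by
    have := le_max_left r 0; simp only [hR]; linarith
  have hRpos : 0 < R := by positivity
  have habs : ∀ x ∈ tsupport g, |x| ≤ r := by
    intro x hx
    have := hr hx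
    simpa [Real.dist_eq] using this
  have hsub : tsupport g ⊆ Set.Icc (-R) R := by
    intro x hx
    have h1 := abs_le.1 (habs x hx)
    exact ⟨by linarith, by linarith⟩
  have hvan : ∀ x, x ∉ Set.Icc (-R) R → g' x = 0 := by
    intro x hx
    have hx' : x ∉ tsupport g := fun h => hx (hsub h)
    have : x ∉ Function.support (deriv g) := fun h => hx' (support_deriv_subset h)
    simpa [hderiv] using Function.notMem_support.mp this
  have h1 : (∫ t, g' t) = ∫ t in Set.Icc (-R) R, g' t :=
    (setIntegral_eq_integral_of_forall_compl_eq_zero hvan).symm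
  have h2 : (∫ t in Set.Icc (-R) R, g' t) = ∫ t in (-R)..R, g' t := by
    rw [integral_Icc_eq_integral_Ioc, intervalIntegral.integral_of_le (by linarith)]
  have h3 : (∫ t in (-R)..R, g' t) = g R - g (-R) :=
    intervalIntegral.integral_eq_sub_of_hasDerivAt (fun x _ => hg x)
      (hc.intervalIntegrable _ _)
  have hgR : g R = 0 := by
    apply image_eq_zero_of_notMem_tsupport
    intro h
    have := abs_le.1 (habs R h)
    linarith [this.2]
  have hgmR : g (-R) = 0 := by
    apply image_eq_zero_of_notMem_tsupport
    intro h
    have := abs_le.1 (habs (-R) h)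
    linarith [this.1]
  rw [h1, h2, h3, hgR, hgmR, sub_zero]


lemma norm_sq_eq (z : ℂ) : ‖z‖^2 = z.re^2 + z.im^2 := by
  rw [Complex.sq_norm, Complex.normSq_apply]; ring

lemma young {l : ℝ} (x y : ℝ) (hl : 0 < l) : 2*(x*y) ≤ l*x^2 + y^2/l := by
  rw [← sub_nonneg]
  have h : l*x^2 + y^2/l - 2*(x*y) = (l*x - y)^2 / l := by field_simp; ring
  rw [h]; positivity

lemma hcs_aux {f : ℝ → ℂ} (hs : HasCompactSupport f) (w : ℝ → ℝ) :
    HasCompactSupport (fun t => ‖f t‖^2 * w t) := by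
  have h1 : HasCompactSupport (fun t => ‖f t‖^2) := by
    have := hs.comp_left (g := fun z : ℂ => ‖z‖^2) (by simp)
    simpa [Function.comp_def] using this
  exact h1.mul_right (f' := w)

lemma integrable_aux {f : ℝ → ℂ} (hf : Continuous f) (hs : HasCompactSupport f)
    {w : ℝ → ℝ} (hw : Continuous w) :
    Integrable (fun t => ‖f t‖^2 * w t) :=
  ((hf.norm.pow 2).mul hw).integrable_of_hasCompactSupport (hcs_aux hs w)


lemma key_identity {f : ℝ → ℂ} (hf : ContDiff ℝ (⊤ : ℕ∞) f) (hs : HasCompactSupport f) (q : ℝ) :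
    (∫ t, (2*((f t).re*(deriv f t).re + (f t).im*(deriv f t).im)
        + q*((f t).re^2 + (f t).im^2)) * Real.exp (q*t)) = 0 := by
  have hder : ∀ t, HasDerivAt f (deriv f t) t := fun t =>
    ((hf.differentiable (by simp)) t).hasDerivAt
  have hdc : Continuous (deriv f) := hf.continuous_deriv (by simp)
  have hfc : Continuous f := hf.continuous
  have hre : ∀ t, HasDerivAt (fun t => (f t).re) ((deriv f t).re) t := fun t => by
    simpa [Function.comp_def] using (Complex.reCLM.hasFDerivAt.comp_hasDerivAt t (hder t))
  have him : ∀ t, HasDerivAt (fun t => (f t).im) ((deriv f t).im) t := fun t => by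
    simpa [Function.comp_def] using (Complex.imCLM.hasFDerivAt.comp_hasDerivAt t (hder t))
  have hgderiv : ∀ t, HasDerivAt (fun t => ((f t).re^2 + (f t).im^2) * Real.exp (q*t))
      ((2*((f t).re*(deriv f t).re + (f t).im*(deriv f t).im)
        + q*((f t).re^2 + (f t).im^2)) * Real.exp (q*t)) t := by
    intro t
    have h1 : HasDerivAt (fun t => (f t).re^2 + (f t).im^2)
        (2*((f t).re*(deriv f t).re) + 2*((f t).im*(deriv f t).im)) t := by
      have := (((hre t).pow 2).add ((him t).pow 2))
      refine this.congr_deriv ?_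
      push_cast
      ring
    have h2 : HasDerivAt (fun t => Real.exp (q*t)) (q * Real.exp (q*t)) t := by
      simpa [mul_comm, Function.comp_def] using (Real.hasDerivAt_exp (q*t)).comp t ((hasDerivAt_id t).const_mul q)
    have := h1.mul h2
    refine this.congr_deriv ?_
    ring
  have hcont : Continuous (fun t => (2*((f t).re*(deriv f t).re + (f t).im*(deriv f t).im)
        + q*((f t).re^2 + (f t).im^2)) * Real.exp (q*t)) := by
    fun_prop
  have hsupp : HasCompactSupport (fun t => ((f t).re^2 + (f t).im^2) * Real.exp (q*t)) := by
    have h1 : HasCompactSupport (fun t => (f t).re^2 + (f t).im^2) := by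
      have := hs.comp_left (g := fun z : ℂ => z.re^2 + z.im^2) (by simp)
      simpa [Function.comp_def] using this
    exact h1.mul_right (f' := fun t => Real.exp (q*t))
  exact integral_hasDerivAt_eq_zero hgderiv hcont hsupp

lemma hcs_scale {X : ℝ → ℝ} (h : HasCompactSupport X) (c : ℝ) :
    HasCompactSupport (fun t => c * X t) := by
  apply h.mono'
  intro x hx
  apply subset_tsupport
  simp only [Function.mem_support] at hx ⊢
  intro h0; apply hx; rw [h0, mul_zero]

lemma Jq_bound {f : ℝ → ℂ} (hf : ContDiff ℝ (⊤ : ℕ∞) f) (hs : HasCompactSupport f)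
    {p q C : ℝ} (hq0 : q ≠ 0) (hq1 : p+1 ≤ q) (hq2 : q ≤ p+3/2)
    (hC1 : (∫ t, ‖deriv f t‖^2 * Real.exp (p*t)) ≤ C)
    (hC2 : (∫ t, ‖f t‖^2 * Real.exp ((p+6)*t)) ≤ C) :
    (∫ t, ‖f t‖^2 * Real.exp (q*t)) ≤ (4/q^2 + 1) * C := by
  have hfc : Continuous f := hf.continuous
  have hdc : Continuous (deriv f) := hf.continuous_deriv (by simp)
  have hs' : HasCompactSupport (deriv f) := hs.deriv
  set S : ℝ → ℝ := fun t => (f t).re*(deriv f t).re + (f t).im*(deriv f t).im with hS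
  set N : ℝ → ℝ := fun t => (f t).re^2 + (f t).im^2 with hN
  set J : ℝ := ∫ t, ‖f t‖^2 * Real.exp (q*t) with hJ
  have hJ0 : 0 ≤ J := integral_nonneg (fun t => by positivity)
  have iJ : Integrable (fun t => ‖f t‖^2 * Real.exp (q*t)) :=
    integrable_aux hfc hs (by fun_prop)
  have i6 : Integrable (fun t => ‖f t‖^2 * Real.exp ((p+6)*t)) :=
    integrable_aux hfc hs (by fun_prop)
  have i1 : Integrable (fun t => ‖deriv f t‖^2 * Real.exp (p*t)) :=
    integrable_aux hdc hs' (by fun_prop)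
  have i2qp : Integrable (fun t => ‖f t‖^2 * Real.exp ((2*q-p)*t)) :=
    integrable_aux hfc hs (by fun_prop)
  -- compact supports
  have hFcs : HasCompactSupport (fun t => (f t).re) := by
    have := hs.comp_left (g := Complex.re) rfl
    simpa [Function.comp_def] using this
  have hGcs : HasCompactSupport (fun t => (f t).im) := by
    have := hs.comp_left (g := Complex.im) rfl
    simpa [Function.comp_def] using this
  have hScs : HasCompactSupport S :=
    (hFcs.mul_right (f' := fun t => (deriv f t).re)).add
      (hGcs.mul_right (f' := fun t => (deriv f t).im))
  have hNcs : HasCompactSupport N := by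
    have h1 := hs.comp_left (g := fun z : ℂ => z.re^2 + z.im^2) (by simp)
    simpa [Function.comp_def] using h1
  have iA : Integrable (fun t => (2*S t) * Real.exp (q*t)) := by
    apply Continuous.integrable_of_hasCompactSupport
    · fun_prop
    · exact (hcs_scale hScs 2).mul_right (f' := fun t => Real.exp (q*t))
  have iB : Integrable (fun t => (q*N t) * Real.exp (q*t)) := by
    apply Continuous.integrable_of_hasCompactSupport
    · fun_prop
    · exact (hcs_scale hNcs q).mul_right (f' := fun t => Real.exp (q*t))
  -- the identity
  have hid := key_identity hf hs q
  have hsum : (∫ t, ((2*S t) * Real.exp (q*t) + (q*N t) * Real.exp (q*t))) = 0 := by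
    rw [← hid]; congr 1; funext t; simp only [hS, hN]; ring
  rw [integral_add iA iB] at hsum
  have hB : (∫ t, (q*N t) * Real.exp (q*t)) = q * J := by
    rw [show (fun t => (q*N t) * Real.exp (q*t))
        = fun t => q * (‖f t‖^2 * Real.exp (q*t)) from funext fun t => by
          simp only [hN]; rw [norm_sq_eq]; ring,
      integral_const_mul q _]
  have hqJ : q * J = - ∫ t, (2*S t) * Real.exp (q*t) := by
    rw [← hB]; linarith
  set a : ℝ := |q| with ha
  have ha0 : 0 < a := abs_pos.mpr hq0
  set l : ℝ := 2 / a with hl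
  have hl0 : 0 < l := by positivity
  -- pointwise bound
  have hpt : ∀ t, |(2*S t) * Real.exp (q*t)| ≤
      l * (‖deriv f t‖^2 * Real.exp (p*t)) + (‖f t‖^2 * Real.exp ((2*q-p)*t))/l := by
    intro t
    have hSle : |S t| ≤ ‖f t‖ * ‖deriv f t‖ := by
      have h1 : S t = ((starRingEnd ℂ) (f t) * deriv f t).re := by
        simp only [hS, Complex.mul_re, Complex.conj_re, Complex.conj_im]; ring
      rw [h1]
      calc |((starRingEnd ℂ) (f t) * deriv f t).re| ≤ ‖(starRingEnd ℂ) (f t) * deriv f t‖ :=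
            Complex.abs_re_le_norm _
        _ = ‖f t‖ * ‖deriv f t‖ := by rw [norm_mul, RCLike.norm_conj]
    have he : Real.exp (p*t/2) * Real.exp ((2*q-p)*t/2) = Real.exp (q*t) := by
      rw [← Real.exp_add]; congr 1; ring
    have hx2 : Real.exp (p*t/2)^2 = Real.exp (p*t) := by
      rw [pow_two, ← Real.exp_add]; congr 1; ring
    have hy2 : Real.exp ((2*q-p)*t/2)^2 = Real.exp ((2*q-p)*t) := by
      rw [pow_two, ← Real.exp_add]; congr 1; ring
    have hyoung := young (‖deriv f t‖ * Real.exp (p*t/2))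
      (‖f t‖ * Real.exp ((2*q-p)*t/2)) hl0
    calc |(2*S t) * Real.exp (q*t)| = 2 * |S t| * Real.exp (q*t) := by
          rw [abs_mul, abs_mul, abs_of_nonneg (Real.exp_pos _).le, abs_two]
      _ ≤ 2 * (‖f t‖ * ‖deriv f t‖) * Real.exp (q*t) := by
          apply mul_le_mul_of_nonneg_right _ (Real.exp_pos _).le
          exact mul_le_mul_of_nonneg_left hSle (by norm_num)
      _ = 2 * ((‖deriv f t‖ * Real.exp (p*t/2)) * (‖f t‖ * Real.exp ((2*q-p)*t/2))) := by
          rw [← he]; ring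
      _ ≤ l * (‖deriv f t‖ * Real.exp (p*t/2))^2
            + (‖f t‖ * Real.exp ((2*q-p)*t/2))^2 / l := hyoung
      _ = l * (‖deriv f t‖^2 * Real.exp (p*t)) + (‖f t‖^2 * Real.exp ((2*q-p)*t))/l := by
          rw [mul_pow, mul_pow, hx2, hy2]
  -- integrate
  have hint : |∫ t, (2*S t) * Real.exp (q*t)| ≤
      l * (∫ t, ‖deriv f t‖^2 * Real.exp (p*t)) + (∫ t, ‖f t‖^2 * Real.exp ((2*q-p)*t))/l := by
    calc |∫ t, (2*S t) * Real.exp (q*t)| ≤ ∫ t, |(2*S t) * Real.exp (q*t)| := by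
          simpa only [Real.norm_eq_abs] using
            norm_integral_le_integral_norm (μ := volume) (fun t => (2*S t) * Real.exp (q*t))
      _ ≤ ∫ t, (l * (‖deriv f t‖^2 * Real.exp (p*t))
            + (‖f t‖^2 * Real.exp ((2*q-p)*t))/l) :=
          integral_mono iA.abs ((i1.const_mul l).add (i2qp.div_const l)) hpt
      _ = l * (∫ t, ‖deriv f t‖^2 * Real.exp (p*t))
            + (∫ t, ‖f t‖^2 * Real.exp ((2*q-p)*t))/l := by
          rw [integral_add (i1.const_mul l) (i2qp.div_const l), integral_const_mul,
            integral_div]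
  -- middle-exponent bound
  have hE : (∫ t, ‖f t‖^2 * Real.exp ((2*q-p)*t)) ≤ J + C := by
    have hptE : ∀ t, ‖f t‖^2 * Real.exp ((2*q-p)*t)
        ≤ ‖f t‖^2 * Real.exp (q*t) + ‖f t‖^2 * Real.exp ((p+6)*t) := by
      intro t
      rcases le_or_gt t 0 with ht | ht
      · have : Real.exp ((2*q-p)*t) ≤ Real.exp (q*t) := by
          apply Real.exp_le_exp.mpr
          nlinarith
        nlinarith [sq_nonneg ‖f t‖, Real.exp_pos ((p+6)*t), this,
          mul_le_mul_of_nonneg_left this (sq_nonneg ‖f t‖)]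
      · have : Real.exp ((2*q-p)*t) ≤ Real.exp ((p+6)*t) := by
          apply Real.exp_le_exp.mpr
          nlinarith
        nlinarith [sq_nonneg ‖f t‖, Real.exp_pos (q*t),
          mul_le_mul_of_nonneg_left this (sq_nonneg ‖f t‖)]
    calc (∫ t, ‖f t‖^2 * Real.exp ((2*q-p)*t))
        ≤ ∫ t, (‖f t‖^2 * Real.exp (q*t) + ‖f t‖^2 * Real.exp ((p+6)*t)) :=
          integral_mono i2qp (iJ.add i6) hptE
      _ = J + (∫ t, ‖f t‖^2 * Real.exp ((p+6)*t)) := integral_add iJ i6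
      _ ≤ J + C := by linarith
  -- combine
  have hchain : a * J ≤ l * C + (J + C)/l := by
    have h1 : a * J = |q * J| := by rw [abs_mul, ha, abs_of_nonneg hJ0]
    have h2 : |q * J| = |∫ t, (2*S t) * Real.exp (q*t)| := by rw [hqJ, abs_neg]
    have h3 : l * (∫ t, ‖deriv f t‖^2 * Real.exp (p*t)) ≤ l * C :=
      mul_le_mul_of_nonneg_left hC1 hl0.le
    have h4 : (∫ t, ‖f t‖^2 * Real.exp ((2*q-p)*t))/l ≤ (J + C)/l :=
      (div_le_div_iff_of_pos_right hl0).mpr hE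
    linarith [hint]
  have hC0 : 0 ≤ C := le_trans (integral_nonneg (fun t => by positivity)) hC2
  have hld : (J+C)/l = (J+C)*(a/2) := by rw [hl]; field_simp
  have hlC : l * C = (2/a)*C := by rw [hl]
  have hchain2 : a * J ≤ (2/a)*C + (J+C)*(a/2) := by
    rw [← hld, ← hlC]; exact hchain
  have hchain3 : a * J * (2*a) ≤ ((2/a)*C + (J+C)*(a/2)) * (2*a) :=
    mul_le_mul_of_nonneg_right hchain2 (by positivity)
  have hexp : ((2/a)*C + (J+C)*(a/2)) * (2*a) = 4*C + (J+C)*a^2 := by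
    field_simp; ring
  rw [hexp] at hchain3
  have ha2 : a^2 = q^2 := sq_abs q
  have hq2pos : 0 < q^2 := by positivity
  rw [show (4/q^2+1)*C = (4*C+q^2*C)/q^2 from by field_simp, le_div_iff₀ hq2pos]
  nlinarith [hchain3, ha2]


lemma interval_est {f : ℝ → ℂ} (hf : ContDiff ℝ (⊤ : ℕ∞) f) {a b : ℝ} (hab : a < b) :
    (∫ t in a..b, ‖f t‖^2) ≤ (2/(b-a)) * ‖∫ t in a..b, f t‖^2
      + (b-a)^3 + (b-a) * (∫ t in a..b, ‖deriv f t‖^2)^2 := by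
  have hfc : Continuous f := hf.continuous
  have hdc : Continuous (deriv f) := hf.continuous_deriv (by simp)
  have hder : ∀ t, HasDerivAt f (deriv f t) t := fun t =>
    ((hf.differentiable (by simp)) t).hasDerivAt
  set δ : ℝ := b - a with hδdef
  have hδ : 0 < δ := by simp [hδdef]; linarith
  set M : ℝ := ∫ t in a..b, ‖deriv f t‖ with hMdef
  set D : ℝ := ∫ t in a..b, ‖deriv f t‖^2 with hDdef
  set A : ℂ := ∫ t in a..b, f t with hAdef
  have hM0 : 0 ≤ M := intervalIntegral.integral_nonneg hab.le (fun t _ => norm_nonneg _)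
  have hD0 : 0 ≤ D := intervalIntegral.integral_nonneg hab.le (fun t _ => by positivity)
  have hMD : M ≤ δ/2 + D/2 := by
    have h1 : (∫ t in a..b, ‖deriv f t‖) ≤ ∫ t in a..b, (1/2 + ‖deriv f t‖^2/2) := by
      apply intervalIntegral.integral_mono_on hab.le (hdc.norm.intervalIntegrable _ _)
        (((continuous_const.add ((hdc.norm.pow 2).div_const 2))).intervalIntegrable _ _)
      intro t _
      simp only [Pi.add_apply, Pi.pow_apply]
      nlinarith [sq_nonneg (‖deriv f t‖ - 1)]
    have h2 : (∫ t in a..b, (1/2 + ‖deriv f t‖^2/2)) = δ/2 + D/2 := by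
      rw [intervalIntegral.integral_add (f := fun _ => (1/2:ℝ)) (g := fun t => ‖deriv f t‖^2/2) (intervalIntegrable_const)
        (((hdc.norm.pow 2).div_const 2).intervalIntegrable _ _),
        intervalIntegral.integral_const, intervalIntegral.integral_div]
      simp [hδdef, hDdef, smul_eq_mul]
      ring
    calc M ≤ ∫ t in a..b, (1/2 + ‖deriv f t‖^2/2) := h1
      _ = δ/2 + D/2 := h2
  have hosc : ∀ s ∈ Set.Icc a b, ∀ t ∈ Set.Icc a b, ‖f t - f s‖ ≤ M := by
    intro s hs t ht
    have heq : f t - f s = ∫ u in s..t, deriv f u :=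
      (intervalIntegral.integral_eq_sub_of_hasDerivAt (fun x _ => hder x)
        (hdc.intervalIntegrable s t)).symm
    rw [heq]
    calc ‖∫ u in s..t, deriv f u‖ ≤ |∫ u in s..t, ‖deriv f u‖| :=
          intervalIntegral.norm_integral_le_abs_integral_norm
      _ ≤ M := by
        rcases le_total s t with hst | hst
        · rw [abs_of_nonneg (intervalIntegral.integral_nonneg hst (fun u _ => norm_nonneg _))]
          exact intervalIntegral.integral_mono_interval hs.1 hst ht.2
            (Filter.Eventually.of_forall fun u => norm_nonneg _)
            (hdc.norm.intervalIntegrable _ _)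
        · rw [intervalIntegral.integral_symm,
            abs_neg,
            abs_of_nonneg (intervalIntegral.integral_nonneg hst (fun u _ => norm_nonneg _))]
          exact intervalIntegral.integral_mono_interval ht.1 hst hs.2
            (Filter.Eventually.of_forall fun u => norm_nonneg _)
            (hdc.norm.intervalIntegrable _ _)
  have havg : ∀ t ∈ Set.Icc a b, ‖δ • f t - A‖ ≤ δ * M := by
    intro t ht
    have h1 : δ • f t - A = ∫ s in a..b, (f t - f s) := by
      rw [intervalIntegral.integral_sub (intervalIntegrable_const) (hfc.intervalIntegrable _ _),
        intervalIntegral.integral_const]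
    rw [h1]
    calc ‖∫ s in a..b, (f t - f s)‖ ≤ ∫ s in a..b, ‖f t - f s‖ :=
          intervalIntegral.norm_integral_le_integral_norm hab.le
      _ ≤ ∫ s in a..b, M := by
          apply intervalIntegral.integral_mono_on hab.le
            ((continuous_const.sub hfc).norm.intervalIntegrable _ _)
            (intervalIntegrable_const)
          intro s hs
          exact hosc s hs t ht
      _ = δ * M := by rw [intervalIntegral.integral_const, smul_eq_mul]
  have hpt : ∀ t ∈ Set.Icc a b, ‖f t‖^2 ≤ 2*(‖A‖/δ)^2 + 2*M^2 := by
    intro t ht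
    have h1 : ‖f t - δ⁻¹ • A‖ ≤ M := by
      have h2 : f t - δ⁻¹ • A = δ⁻¹ • (δ • f t - A) := by
        rw [smul_sub, smul_smul, inv_mul_cancel₀ hδ.ne', one_smul]
      rw [h2, norm_smul, norm_inv, Real.norm_eq_abs, abs_of_pos hδ]
      calc δ⁻¹ * ‖δ • f t - A‖ ≤ δ⁻¹ * (δ * M) :=
            mul_le_mul_of_nonneg_left (havg t ht) (by positivity)
        _ = M := by field_simp
    have h3 : ‖f t‖ ≤ ‖A‖/δ + M := by
      calc ‖f t‖ = ‖(f t - δ⁻¹ • A) + δ⁻¹ • A‖ := by rw [sub_add_cancel]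
        _ ≤ ‖f t - δ⁻¹ • A‖ + ‖δ⁻¹ • A‖ := norm_add_le _ _
        _ ≤ M + ‖A‖/δ := by
            apply add_le_add h1
            rw [norm_smul, norm_inv, Real.norm_eq_abs, abs_of_pos hδ, div_eq_inv_mul]
        _ = ‖A‖/δ + M := by ring
    nlinarith [mul_self_le_mul_self (norm_nonneg (f t)) h3, sq_nonneg (‖A‖/δ - M)]
  have hint : (∫ t in a..b, ‖f t‖^2) ≤ ∫ t in a..b, (2*(‖A‖/δ)^2 + 2*M^2) := by
    exact intervalIntegral.integral_mono_on hab.le ((hfc.norm.pow 2).intervalIntegrable _ _)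
      intervalIntegrable_const hpt
  rw [intervalIntegral.integral_const, smul_eq_mul] at hint
  have hM2 : M^2 ≤ δ^2/2 + D^2/2 := by nlinarith [mul_self_le_mul_self hM0 hMD, sq_nonneg (δ - D)]
  calc (∫ t in a..b, ‖f t‖^2) ≤ δ * (2*(‖A‖/δ)^2 + 2*M^2) := hint
    _ = 2/δ*‖A‖^2 + 2*δ*M^2 := by field_simp
    _ ≤ (2/δ)*‖A‖^2 + δ^3 + δ*D^2 := by nlinarith [hδ, hM2]

set_option maxHeartbeats 4000000 in
/-- the weighted norm is compact relative to the energy norm. -/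
theorem weighted_L2_compact_relative_to_energy_norm
    (p : ℝ) (u : ℕ → ℝ → ℂ)
    (hsmooth : ∀ k, ContDiff ℝ (⊤ : ℕ∞) (u k) ∧ HasCompactSupport (u k))
    (hbd : ∃ C : ℝ, ∀ k,
      (∫ t, (‖deriv (u k) t‖ ^ 2 * Real.exp (p * t) +
        ‖u k t‖ ^ 2 * Real.exp ((p + 6) * t))) ≤ C)
    (hweak : ∀ v : ℝ → ℂ, AEStronglyMeasurable v volume →
      Integrable (fun t => ‖v t‖ ^ 2 * Real.exp ((p + 2) * t)) →
      Tendsto (fun k => ∫ t, u k t * (starRingEnd ℂ) (v t) * Real.exp ((p + 2) * t))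
        atTop (nhds 0)) :
    Tendsto (fun k => ∫ t, ‖u k t‖ ^ 2 * Real.exp ((p + 2) * t)) atTop (nhds 0) := by
  obtain ⟨C, hC⟩ := hbd
  have hcont : ∀ k, Continuous (u k) := fun k => (hsmooth k).1.continuous
  have hdc : ∀ k, Continuous (deriv (u k)) := fun k => (hsmooth k).1.continuous_deriv (by simp)
  have hsupp : ∀ k, HasCompactSupport (u k) := fun k => (hsmooth k).2
  have hsupp' : ∀ k, HasCompactSupport (deriv (u k)) := fun k => (hsupp k).deriv
  have i1 : ∀ k, Integrable (fun t => ‖deriv (u k) t‖^2 * Real.exp (p*t)) := fun k =>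
    integrable_aux (hdc k) (hsupp' k) (by fun_prop)
  have i6 : ∀ k, Integrable (fun t => ‖u k t‖^2 * Real.exp ((p+6)*t)) := fun k =>
    integrable_aux (hcont k) (hsupp k) (by fun_prop)
  have i2 : ∀ k, Integrable (fun t => ‖u k t‖^2 * Real.exp ((p+2)*t)) := fun k =>
    integrable_aux (hcont k) (hsupp k) (by fun_prop)
  have hC1 : ∀ k, (∫ t, ‖deriv (u k) t‖^2 * Real.exp (p*t)) ≤ C := by
    intro k
    have h := hC k
    rw [integral_add (i1 k) (i6 k)] at h
    have h6 : 0 ≤ ∫ t, ‖u k t‖^2 * Real.exp ((p+6)*t) :=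
      integral_nonneg (fun t => by positivity)
    linarith
  have hC2 : ∀ k, (∫ t, ‖u k t‖^2 * Real.exp ((p+6)*t)) ≤ C := by
    intro k
    have h := hC k
    rw [integral_add (i1 k) (i6 k)] at h
    have h1 : 0 ≤ ∫ t, ‖deriv (u k) t‖^2 * Real.exp (p*t) :=
      integral_nonneg (fun t => by positivity)
    linarith
  have hC0 : 0 ≤ C := le_trans (integral_nonneg (fun t => by positivity)) (hC2 0)
  -- choose q
  obtain ⟨q, hq1, hq2, hq0⟩ : ∃ q : ℝ, p+1 ≤ q ∧ q ≤ p+3/2 ∧ q ≠ 0 := by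
    rcases eq_or_ne (p + 3/2) 0 with h | h
    · exact ⟨p+1, le_refl _, by linarith, by intro h0; linarith⟩
      -- p+1 = 0 would mean p = -1 but p+3/2 = 0 means p = -3/2; contradiction handled
    · exact ⟨p+3/2, by linarith, le_refl _, h⟩
  set B : ℝ := (4/q^2 + 1) * C with hBdef
  have hB0 : 0 ≤ B := by
    have : (0:ℝ) ≤ 4/q^2 + 1 := by positivity
    exact mul_nonneg this hC0
  have hJq : ∀ k, (∫ t, ‖u k t‖^2 * Real.exp (q*t)) ≤ B := fun k =>
    Jq_bound (hsmooth k).1 (hsupp k) hq0 hq1 hq2 (hC1 k) (hC2 k)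
  have iq : ∀ k, Integrable (fun t => ‖u k t‖^2 * Real.exp (q*t)) := fun k =>
    integrable_aux (hcont k) (hsupp k) (by fun_prop)
  rw [NormedAddCommGroup.tendsto_nhds_zero]
  intro ε hε
  -- choose R
  have hT : Tendsto (fun R : ℝ => Real.exp (-(R/2)) * B + Real.exp (-(4*R)) * C)
      atTop (nhds 0) := by
    have t1 : Tendsto (fun R : ℝ => -(R/2)) atTop atBot := by
      apply tendsto_neg_atTop_atBot.comp
      exact tendsto_id.atTop_div_const two_pos
    have t2 : Tendsto (fun R : ℝ => -(4*R)) atTop atBot := by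
      apply tendsto_neg_atTop_atBot.comp
      exact tendsto_id.const_mul_atTop four_pos
    have e1 : Tendsto (fun R : ℝ => Real.exp (-(R/2)) * B) atTop (nhds 0) := by
      simpa using (Real.tendsto_exp_atBot.comp t1).mul_const B
    have e2 : Tendsto (fun R : ℝ => Real.exp (-(4*R)) * C) atTop (nhds 0) := by
      simpa using (Real.tendsto_exp_atBot.comp t2).mul_const C
    simpa using e1.add e2
  obtain ⟨R, hRε, hR1⟩ :
      ∃ R : ℝ, Real.exp (-(R/2)) * B + Real.exp (-(4*R)) * C < ε/2 ∧ 1 ≤ R := by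
    have := (hT.eventually (gt_mem_nhds (show 0 < ε/2 by linarith))).and (eventually_ge_atTop 1)
    obtain ⟨R, h1, h2⟩ := this.exists
    exact ⟨R, h1, h2⟩
  have hR0 : 0 < R := lt_of_lt_of_le one_pos hR1
  set K1 : ℝ := Real.exp ((|p + 2|) * R) with hK1def
  have hK10 : 0 < K1 := Real.exp_pos _
  set CR : ℝ := Real.exp ((|p|) * R) * C with hCRdef
  have hCR0 : 0 ≤ CR := mul_nonneg (Real.exp_pos _).le hC0
  -- bound on ∫_{-R}^R ‖(u k)'‖²
  have hDR : ∀ k, (∫ t in (-R)..R, ‖deriv (u k) t‖^2) ≤ CR := by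
    intro k
    have hstep1 : (∫ t in (-R)..R, ‖deriv (u k) t‖^2)
        ≤ ∫ t in (-R)..R, Real.exp ((|p|) * R) * (‖deriv (u k) t‖^2 * Real.exp (p*t)) := by
      apply intervalIntegral.integral_mono_on (by linarith)
        (((hdc k).norm.pow 2).intervalIntegrable _ _)
        ((continuous_const.mul (((hdc k).norm.pow 2).mul (by fun_prop))).intervalIntegrable _ _)
      intro t ht
      have h1 : 1 ≤ Real.exp ((|p|) * R) * Real.exp (p*t) := by
        rw [← Real.exp_add, ← Real.exp_zero]
        apply Real.exp_le_exp.mpr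
        rcases abs_cases p with ⟨hp, _⟩ | ⟨hp, _⟩
        · nlinarith [ht.1, ht.2, abs_nonneg p, neg_abs_le p]
        · nlinarith [ht.1, ht.2, abs_nonneg p, neg_abs_le p]
      simp only [Pi.mul_apply, Pi.pow_apply]
      nlinarith [sq_nonneg ‖deriv (u k) t‖, h1, mul_le_mul_of_nonneg_left h1 (sq_nonneg ‖deriv (u k) t‖)]
    have hstep2 : (∫ t in (-R)..R, Real.exp ((|p|) * R) * (‖deriv (u k) t‖^2 * Real.exp (p*t)))
        = Real.exp ((|p|) * R) * ∫ t in (-R)..R, ‖deriv (u k) t‖^2 * Real.exp (p*t) := by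
      rw [intervalIntegral.integral_const_mul]
    have hstep3 : (∫ t in (-R)..R, ‖deriv (u k) t‖^2 * Real.exp (p*t))
        ≤ ∫ t, ‖deriv (u k) t‖^2 * Real.exp (p*t) := by
      rw [intervalIntegral.integral_of_le (by linarith)]
      apply setIntegral_le_integral (i1 k)
      exact Filter.Eventually.of_forall (fun t => by positivity)
    calc (∫ t in (-R)..R, ‖deriv (u k) t‖^2) ≤ _ := hstep1
      _ = _ := hstep2
      _ ≤ Real.exp ((|p|) * R) * ∫ t, ‖deriv (u k) t‖^2 * Real.exp (p*t) := by
          apply mul_le_mul_of_nonneg_left hstep3 (Real.exp_pos _).le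
      _ ≤ CR := by
          rw [hCRdef]
          exact mul_le_mul_of_nonneg_left (hC1 k) (Real.exp_pos _).le
  -- choose δ via n
  set δ0 : ℝ := min 1 (ε/(4 * (K1*(2*R + CR^2) + 1))) with hδ0def
  have hδ00 : 0 < δ0 := lt_min one_pos (by positivity)
  obtain ⟨n, hn⟩ : ∃ n : ℕ, 2*R/δ0 < n := exists_nat_gt _
  have hn0 : 0 < (n:ℝ) := lt_of_le_of_lt (by positivity) hn
  set δ : ℝ := 2*R/n with hδdef
  have hδpos : 0 < δ := by positivity
  have hδlt : δ < δ0 := by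
    rw [hδdef, div_lt_iff₀ hn0]
    calc 2*R = (2*R/δ0) * δ0 := by field_simp
      _ < n * δ0 := mul_lt_mul_of_pos_right hn hδ00
      _ = δ0 * n := by ring
  have hδ1 : δ ≤ 1 := le_trans hδlt.le (min_le_left _ _)
  have hnδ : (n:ℝ) * δ = 2*R := by
    rw [hδdef]; field_simp
  set x : ℕ → ℝ := fun j => -R + j*δ with hxdef
  have hx0 : x 0 = -R := by simp [hxdef]
  have hxn : x n = R := by
    simp only [hxdef]; rw [hnδ]; ring
  have hxlt : ∀ j : ℕ, x j < x (j+1) := by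
    intro j
    simp only [hxdef]
    have : (j:ℝ) < (j:ℝ) + 1 := by linarith
    push_cast
    nlinarith [hδpos]
  have hxd : ∀ j : ℕ, x (j+1) - x j = δ := by
    intro j; simp only [hxdef]; push_cast; ring
  set Aint : ℕ → ℕ → ℂ := fun j k => ∫ t in x j..x (j+1), u k t with hAintdef
  set Dint : ℕ → ℕ → ℝ := fun j k => ∫ t in x j..x (j+1), ‖deriv (u k) t‖^2 with hDintdef
  have hDnn : ∀ j k, 0 ≤ Dint j k := fun j k =>
    intervalIntegral.integral_nonneg (hxlt j).le (fun t _ => by positivity)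
  have hsumD : ∀ k, (∑ j ∈ Finset.range n, Dint j k) = ∫ t in (-R)..R, ‖deriv (u k) t‖^2 := by
    intro k
    rw [← hx0, ← hxn]
    exact intervalIntegral.sum_integral_adjacent_intervals
      (fun j _ => (((hdc k).norm.pow 2).intervalIntegrable _ _))
  have hsumN : ∀ k, (∑ j ∈ Finset.range n, ∫ t in x j..x (j+1), ‖u k t‖^2)
      = ∫ t in (-R)..R, ‖u k t‖^2 := by
    intro k
    rw [← hx0, ← hxn]
    exact intervalIntegral.sum_integral_adjacent_intervals
      (fun j _ => (((hcont k).norm.pow 2).intervalIntegrable _ _))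
  have hmidu : ∀ k, (∫ t in (-R)..R, ‖u k t‖^2)
      ≤ (2/δ) * (∑ j ∈ Finset.range n, ‖Aint j k‖^2) + 2*R*δ^2 + δ*CR^2 := by
    intro k
    rw [← hsumN k]
    have hper : ∀ j ∈ Finset.range n, (∫ t in x j..x (j+1), ‖u k t‖^2)
        ≤ (2/δ)*‖Aint j k‖^2 + δ^3 + δ*(Dint j k)^2 := by
      intro j _
      have h := interval_est (hsmooth k).1 (hxlt j)
      rw [hxd j] at h
      exact h
    have e2 : (∑ j ∈ Finset.range n, (Dint j k)^2) ≤ CR^2 := by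
      calc (∑ j ∈ Finset.range n, (Dint j k)^2)
          ≤ (∑ j ∈ Finset.range n, Dint j k)^2 :=
            Finset.sum_sq_le_sq_sum_of_nonneg (fun j _ => hDnn j k)
        _ ≤ CR^2 := by
            apply pow_le_pow_left₀ (Finset.sum_nonneg (fun j _ => hDnn j k))
            rw [hsumD k]; exact hDR k
    have e3 : δ * (∑ j ∈ Finset.range n, (Dint j k)^2) ≤ δ * CR^2 :=
      mul_le_mul_of_nonneg_left e2 hδpos.le
    have e1 : (n:ℝ)*δ^3 = 2*R*δ^2 := by
      rw [show (n:ℝ)*δ^3 = ((n:ℝ)*δ)*δ^2 by ring, hnδ]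
    calc (∑ j ∈ Finset.range n, ∫ t in x j..x (j+1), ‖u k t‖^2)
        ≤ ∑ j ∈ Finset.range n, ((2/δ)*‖Aint j k‖^2 + δ^3 + δ*(Dint j k)^2) :=
          Finset.sum_le_sum hper
      _ = (2/δ)*(∑ j ∈ Finset.range n, ‖Aint j k‖^2) + (n:ℝ)*δ^3
            + δ*(∑ j ∈ Finset.range n, (Dint j k)^2) := by
          rw [Finset.sum_add_distrib, Finset.sum_add_distrib, ← Finset.mul_sum, ← Finset.mul_sum,
            Finset.sum_const, Finset.card_range, nsmul_eq_mul]
      _ ≤ (2/δ) * (∑ j ∈ Finset.range n, ‖Aint j k‖^2) + 2*R*δ^2 + δ*CR^2 := by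
          rw [e1]; linarith
  -- weighted middle bound
  have hmidw : ∀ k, (∫ t in Set.Icc (-R) R, ‖u k t‖^2 * Real.exp ((p+2)*t))
      ≤ K1 * ∫ t in (-R)..R, ‖u k t‖^2 := by
    intro k
    have hpt : ∀ t ∈ Set.Icc (-R) R, ‖u k t‖^2 * Real.exp ((p+2)*t) ≤ K1 * ‖u k t‖^2 := by
      intro t ht
      have hexp : Real.exp ((p+2)*t) ≤ K1 := by
        rw [hK1def]
        apply Real.exp_le_exp.mpr
        calc (p+2)*t ≤ |(p+2)*t| := le_abs_self _
          _ = |p+2| * |t| := abs_mul _ _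
          _ ≤ (|p + 2|) * R := by
              apply mul_le_mul_of_nonneg_left _ (abs_nonneg _)
              rw [abs_le]; exact ⟨ht.1, ht.2⟩
      nlinarith [sq_nonneg ‖u k t‖]
    calc (∫ t in Set.Icc (-R) R, ‖u k t‖^2 * Real.exp ((p+2)*t))
        ≤ ∫ t in Set.Icc (-R) R, K1 * ‖u k t‖^2 := by
          apply setIntegral_mono_on ((i2 k).integrableOn)
            ((continuous_const.mul ((hcont k).norm.pow 2)).integrableOn_Icc)
            measurableSet_Icc hpt
      _ = K1 * ∫ t in Set.Icc (-R) R, ‖u k t‖^2 := integral_const_mul _ _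
      _ = K1 * ∫ t in (-R)..R, ‖u k t‖^2 := by
          rw [integral_Icc_eq_integral_Ioc, intervalIntegral.integral_of_le (by linarith : -R ≤ R)]
  -- global split
  have hsplit : ∀ k, (∫ t, ‖u k t‖^2 * Real.exp ((p+2)*t))
      ≤ Real.exp (-(R/2)) * B + K1 * (∫ t in (-R)..R, ‖u k t‖^2) + Real.exp (-(4*R)) * C := by
    intro k
    have ig1 : Integrable (fun t => Real.exp (-(R/2)) * (‖u k t‖^2 * Real.exp (q*t))) :=
      (iq k).const_mul _
    have ig2 : Integrable (fun t =>
        Set.indicator (Set.Icc (-R) R) (fun t => ‖u k t‖^2 * Real.exp ((p+2)*t)) t) :=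
      (i2 k).indicator measurableSet_Icc
    have ig3 : Integrable (fun t => Real.exp (-(4*R)) * (‖u k t‖^2 * Real.exp ((p+6)*t))) :=
      (i6 k).const_mul _
    have hptw : ∀ t, ‖u k t‖^2 * Real.exp ((p+2)*t)
        ≤ Real.exp (-(R/2)) * (‖u k t‖^2 * Real.exp (q*t))
          + Set.indicator (Set.Icc (-R) R) (fun t => ‖u k t‖^2 * Real.exp ((p+2)*t)) t
          + Real.exp (-(4*R)) * (‖u k t‖^2 * Real.exp ((p+6)*t)) := by
      intro t
      by_cases ht : t ∈ Set.Icc (-R) R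
      · rw [Set.indicator_of_mem ht]
        have h1 : 0 ≤ Real.exp (-(R/2)) * (‖u k t‖^2 * Real.exp (q*t)) := by positivity
        have h3 : 0 ≤ Real.exp (-(4*R)) * (‖u k t‖^2 * Real.exp ((p+6)*t)) := by positivity
        linarith
      · rw [Set.indicator_of_notMem ht]
        simp only [Set.mem_Icc, not_and_or, not_le] at ht
        rcases ht with ht | ht
        · have hexp : Real.exp ((p+2)*t) ≤ Real.exp (-(R/2)) * Real.exp (q*t) := by
            rw [← Real.exp_add]
            apply Real.exp_le_exp.mpr
            nlinarith [hq2, hR1, ht]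
          have h3 : 0 ≤ Real.exp (-(4*R)) * (‖u k t‖^2 * Real.exp ((p+6)*t)) := by positivity
          nlinarith [mul_le_mul_of_nonneg_left hexp (sq_nonneg ‖u k t‖)]
        · have hexp : Real.exp ((p+2)*t) ≤ Real.exp (-(4*R)) * Real.exp ((p+6)*t) := by
            rw [← Real.exp_add]
            apply Real.exp_le_exp.mpr
            nlinarith [ht]
          have h1 : 0 ≤ Real.exp (-(R/2)) * (‖u k t‖^2 * Real.exp (q*t)) := by positivity
          nlinarith [mul_le_mul_of_nonneg_left hexp (sq_nonneg ‖u k t‖)]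
    have isum : Integrable (fun t => Real.exp (-(R/2)) * (‖u k t‖^2 * Real.exp (q*t))
        + Set.indicator (Set.Icc (-R) R) (fun t => ‖u k t‖^2 * Real.exp ((p+2)*t)) t
        + Real.exp (-(4*R)) * (‖u k t‖^2 * Real.exp ((p+6)*t))) := (ig1.add ig2).add ig3
    have hbound : (∫ t, ‖u k t‖^2 * Real.exp ((p+2)*t))
        ≤ ∫ t, (Real.exp (-(R/2)) * (‖u k t‖^2 * Real.exp (q*t))
          + Set.indicator (Set.Icc (-R) R) (fun t => ‖u k t‖^2 * Real.exp ((p+2)*t)) t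
          + Real.exp (-(4*R)) * (‖u k t‖^2 * Real.exp ((p+6)*t))) :=
      integral_mono (i2 k) isum hptw
    have e1 : (∫ t, (Real.exp (-(R/2)) * (‖u k t‖^2 * Real.exp (q*t))
          + Set.indicator (Set.Icc (-R) R) (fun t => ‖u k t‖^2 * Real.exp ((p+2)*t)) t
          + Real.exp (-(4*R)) * (‖u k t‖^2 * Real.exp ((p+6)*t))))
        = (∫ t, (Real.exp (-(R/2)) * (‖u k t‖^2 * Real.exp (q*t))
          + Set.indicator (Set.Icc (-R) R) (fun t => ‖u k t‖^2 * Real.exp ((p+2)*t)) t))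
          + ∫ t, Real.exp (-(4*R)) * (‖u k t‖^2 * Real.exp ((p+6)*t)) :=
      integral_add (ig1.add ig2) ig3
    have e2 : (∫ t, (Real.exp (-(R/2)) * (‖u k t‖^2 * Real.exp (q*t))
          + Set.indicator (Set.Icc (-R) R) (fun t => ‖u k t‖^2 * Real.exp ((p+2)*t)) t))
        = (∫ t, Real.exp (-(R/2)) * (‖u k t‖^2 * Real.exp (q*t)))
          + ∫ t, Set.indicator (Set.Icc (-R) R) (fun t => ‖u k t‖^2 * Real.exp ((p+2)*t)) t :=
      integral_add ig1 ig2
    have e3 : (∫ t, Real.exp (-(R/2)) * (‖u k t‖^2 * Real.exp (q*t)))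
        = Real.exp (-(R/2)) * ∫ t, ‖u k t‖^2 * Real.exp (q*t) := integral_const_mul _ _
    have e4 : (∫ t, Set.indicator (Set.Icc (-R) R) (fun t => ‖u k t‖^2 * Real.exp ((p+2)*t)) t)
        = ∫ t in Set.Icc (-R) R, ‖u k t‖^2 * Real.exp ((p+2)*t) :=
      integral_indicator measurableSet_Icc
    have e5 : (∫ t, Real.exp (-(4*R)) * (‖u k t‖^2 * Real.exp ((p+6)*t)))
        = Real.exp (-(4*R)) * ∫ t, ‖u k t‖^2 * Real.exp ((p+6)*t) := integral_const_mul _ _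
    have hJ : Real.exp (-(R/2)) * (∫ t, ‖u k t‖^2 * Real.exp (q*t)) ≤ Real.exp (-(R/2)) * B :=
      mul_le_mul_of_nonneg_left (hJq k) (Real.exp_pos _).le
    have h6 : Real.exp (-(4*R)) * (∫ t, ‖u k t‖^2 * Real.exp ((p+6)*t))
        ≤ Real.exp (-(4*R)) * C :=
      mul_le_mul_of_nonneg_left (hC2 k) (Real.exp_pos _).le
    have hm := hmidw k
    linarith [hbound, e1, e2, e3, e4, e5, hJ, h6, hm]
  -- weak convergence of averages
  have hAtend : ∀ j : ℕ, Tendsto (fun k => Aint j k) atTop (nhds 0) := by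
    intro j
    set a : ℝ := x j with hadef
    set b : ℝ := x (j+1) with hbdef
    have hab : a ≤ b := (hxlt j).le
    set v : ℝ → ℂ := Set.indicator (Set.Ioc a b) (fun s => (Real.exp (-((p+2)*s)) : ℂ)) with hvdef
    have hmv : AEStronglyMeasurable v volume :=
      (Continuous.aestronglyMeasurable (by fun_prop)).indicator measurableSet_Ioc
    have hiv : Integrable (fun t => ‖v t‖^2 * Real.exp ((p+2)*t)) := by
      have heq : (fun t => ‖v t‖^2 * Real.exp ((p+2)*t))
          = Set.indicator (Set.Ioc a b)
              (fun t => ‖(Real.exp (-((p+2)*t)) : ℂ)‖^2 * Real.exp ((p+2)*t)) := by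
        funext t
        by_cases ht : t ∈ Set.Ioc a b
        · rw [Set.indicator_of_mem ht, hvdef, Set.indicator_of_mem ht]
        · rw [Set.indicator_of_notMem ht, hvdef, Set.indicator_of_notMem ht]
          simp
      rw [heq]
      exact ((by fun_prop : Continuous (fun t : ℝ =>
        ‖(Real.exp (-((p+2)*t)) : ℂ)‖^2 * Real.exp ((p+2)*t))).integrableOn_Ioc).integrable_indicator
        measurableSet_Ioc
    have hw := hweak v hmv hiv
    have heq2 : (fun k => ∫ t, u k t * (starRingEnd ℂ) (v t) * (Real.exp ((p+2)*t) : ℂ))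
        = fun k => Aint j k := by
      funext k
      have hfun : (fun t => u k t * (starRingEnd ℂ) (v t) * (Real.exp ((p+2)*t) : ℂ))
          = Set.indicator (Set.Ioc a b) (fun t => u k t) := by
        funext t
        by_cases ht : t ∈ Set.Ioc a b
        · rw [Set.indicator_of_mem ht, hvdef, Set.indicator_of_mem ht, Complex.conj_ofReal,
            mul_assoc, ← Complex.ofReal_mul, ← Real.exp_add]
          simp
        · rw [Set.indicator_of_notMem ht, hvdef, Set.indicator_of_notMem ht]
          simp
      rw [hfun, integral_indicator measurableSet_Ioc]
      exact (intervalIntegral.integral_of_le hab).symm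
    rw [heq2] at hw
    exact hw
  have hStend : Tendsto (fun k => ∑ j ∈ Finset.range n, ‖Aint j k‖^2) atTop (nhds 0) := by
    have h := tendsto_finset_sum (Finset.range n)
      (fun j _ => (((hAtend j).norm).pow 2))
    simpa using h
  have hfin : ∀ᶠ k in atTop,
      (2*K1/δ) * (∑ j ∈ Finset.range n, ‖Aint j k‖^2) < ε/4 := by
    have hmul : Tendsto (fun k => (2*K1/δ) * (∑ j ∈ Finset.range n, ‖Aint j k‖^2))
        atTop (nhds 0) := by
      simpa using hStend.const_mul (2*K1/δ)
    exact hmul.eventually (gt_mem_nhds (show 0 < ε/4 by linarith))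
  filter_upwards [hfin] with k hk
  have hIk0 : 0 ≤ ∫ t, ‖u k t‖^2 * Real.exp ((p+2)*t) :=
    integral_nonneg (fun t => by positivity)
  rw [Real.norm_eq_abs, abs_of_nonneg hIk0]
  -- numeric assembly
  have hmid := hmidu k
  have h1 := hsplit k
  have h2 : K1 * (∫ t in (-R)..R, ‖u k t‖^2)
      ≤ K1 * ((2/δ) * (∑ j ∈ Finset.range n, ‖Aint j k‖^2) + 2*R*δ^2 + δ*CR^2) :=
    mul_le_mul_of_nonneg_left hmid hK10.le
  have h3 : K1*(2*R*δ^2 + δ*CR^2) < ε/4 := by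
    have hδ0le : δ0 ≤ ε/(4*(K1*(2*R + CR^2) + 1)) := min_le_right _ _
    rw [le_div_iff₀ (by positivity)] at hδ0le
    have hA : K1*(2*R*δ^2 + δ*CR^2) ≤ δ * (K1*(2*R + CR^2)) := by
      have hδ2 : δ^2 ≤ δ := by nlinarith
      nlinarith [mul_le_mul_of_nonneg_left hδ2 (show (0:ℝ) ≤ K1*(2*R) by positivity)]
    have hB2 : δ * (K1*(2*R + CR^2)) < δ0 * (K1*(2*R + CR^2) + 1) := by
      have hmm := mul_le_mul_of_nonneg_right hδlt.le
        (show (0:ℝ) ≤ K1*(2*R+CR^2) by positivity)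
      nlinarith [hmm, hδ00]
    nlinarith [hδ0le, hA, hB2]
  have h4 : K1 * ((2/δ) * (∑ j ∈ Finset.range n, ‖Aint j k‖^2))
      = (2*K1/δ) * (∑ j ∈ Finset.range n, ‖Aint j k‖^2) := by ring
  nlinarith [hRε, hk, h1, h2, h3, h4, hK10]
end

section
/- For every real number p ≠ 0, every u ∈ C_c^∞(ℝ,ℂ) and every b ∈ ℝ, one has ∫_b^∞ |u(τ)|² e^{−(p+2)τ} dτ ≤ (4/p²) e^{−2b} ∫_ℝ |u′(τ)|² e^{−pτ} dτ. -/
open MeasureTheory Real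

/-- a weighted Hardy–Littlewood type inequality: for `p ≠ 0`, every smooth
compactly supported `u : ℝ → ℂ` and every `b ∈ ℝ`,
`∫_b^∞ |u|² e^{−(p+2)τ} dτ ≤ (4/p²) e^{−2b} ∫_ℝ |u′|² e^{−pτ} dτ`. -/
theorem weighted_hardy_inequality
    (p : ℝ) (hp : p ≠ 0) (u : ℝ → ℂ)
    (hu : ContDiff ℝ (⊤ : ℕ∞) u) (hcs : HasCompactSupport u) (b : ℝ) :
    (∫ τ in Set.Ioi b, ‖u τ‖ ^ 2 * Real.exp (-(p + 2) * τ)) ≤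
      (4 / p ^ 2) * Real.exp (-2 * b) * ∫ τ, ‖deriv u τ‖ ^ 2 * Real.exp (-p * τ) := by
  have hud : Differentiable ℝ u := hu.differentiable (by simp)
  have hucont : Continuous u := hu.continuous
  have hu'cont : Continuous (deriv u) := hu.continuous_deriv (by simp)
  have hcs' : HasCompactSupport (deriv u) := hcs.deriv
  set w : ℝ → ℝ := fun τ => Real.exp (-p * τ) with hw
  have hwcont : Continuous w := by continuity
  have hwpos : ∀ τ, 0 < w τ := fun τ => Real.exp_pos _
  set a : ℝ → ℝ := fun τ => ‖u τ‖ ^ 2 * w τ with ha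
  set c : ℝ → ℝ := fun τ => ‖deriv u τ‖ ^ 2 * w τ with hc
  have hacont : Continuous a := by fun_prop
  have hccont : Continuous c := by fun_prop
  have hacs : HasCompactSupport a :=
    (hcs.comp_left (g := fun z : ℂ => ‖z‖ ^ 2) (by simp)).mul_right
  have hccs : HasCompactSupport c :=
    (hcs'.comp_left (g := fun z : ℂ => ‖z‖ ^ 2) (by simp)).mul_right
  have haint : Integrable a := hacont.integrable_of_hasCompactSupport hacs
  have hcint : Integrable c := hccont.integrable_of_hasCompactSupport hccs
  set A := ∫ τ, a τ with hA
  set B := ∫ τ, c τ with hB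
  have hA0 : 0 ≤ A := integral_nonneg fun τ => by positivity
  have hB0 : 0 ≤ B := integral_nonneg fun τ => by positivity
  set g : ℝ → ℝ := fun τ => 2 * (inner ℝ (deriv u τ) (u τ) : ℝ) * w τ with hg
  have hgcont : Continuous g := by
    apply Continuous.mul _ hwcont
    exact continuous_const.mul ((continuous_inner (𝕜 := ℝ)).comp (hu'cont.prodMk hucont))
  have hgcs : HasCompactSupport g := by
    apply hcs.mono
    intro τ hτ
    simp only [Function.mem_support, hg] at hτ ⊢
    intro h0
    apply hτ
    rw [h0]
    simp
  have hgint : Integrable g := hgcont.integrable_of_hasCompactSupport hgcs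
  set F : ℝ → ℝ := fun τ => (inner ℝ (u τ) (u τ) : ℝ) * w τ with hF
  have hFderiv : ∀ τ, HasDerivAt F (g τ - p * a τ) τ := by
    intro τ
    have h : HasDerivAt u (deriv u τ) τ := (hud τ).hasDerivAt
    have h1 : HasDerivAt (fun t => (inner ℝ (u t) (u t) : ℝ))
        (2 * (inner ℝ (deriv u τ) (u τ) : ℝ)) τ := by
      simpa [real_inner_comm, two_mul] using h.inner ℝ h
    have h0 : HasDerivAt (fun t : ℝ => -p * t) (-p) τ := by
      simpa using (hasDerivAt_id τ).const_mul (-p)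
    have h2 : HasDerivAt w (-p * w τ) τ := by
      rw [hw]
      convert h0.exp using 1
      ring
    have h3 : HasDerivAt (fun t => (inner ℝ (u t) (u t) : ℝ) * w t) _ τ := h1.mul h2
    convert h3 using 1
    simp only [hg, ha, ← real_inner_self_eq_norm_sq]
    ring
  have hFint : Integrable F := by
    have hFa : F = a := by
      ext τ
      simp only [hF, ha, real_inner_self_eq_norm_sq]
    rw [hFa]; exact haint
  have hF'int : Integrable (fun τ => g τ - p * a τ) :=
    hgint.sub (haint.const_mul p)
  have hzero : ∫ τ, (g τ - p * a τ) = 0 :=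
    integral_eq_zero_of_hasDerivAt_of_integrable hFderiv hF'int hFint
  have hkey : p * A = ∫ τ, g τ := by
    have hs := integral_sub hgint (haint.const_mul p)
    rw [hzero] at hs
    have h2 : ∫ τ, p * a τ = p * A := integral_const_mul p a
    rw [h2] at hs
    linarith
  have hppos : 0 < |p| := abs_pos.mpr hp
  have hptwise : ∀ τ, |g τ| ≤ |p| / 2 * a τ + 2 / |p| * c τ := by
    intro τ
    have h1 : |(inner ℝ (deriv u τ) (u τ) : ℝ)| ≤ ‖deriv u τ‖ * ‖u τ‖ :=
      abs_real_inner_le_norm _ _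
    have h2 : |g τ| ≤ 2 * (‖deriv u τ‖ * ‖u τ‖) * w τ := by
      have he : |g τ| = 2 * |(inner ℝ (deriv u τ) (u τ) : ℝ)| * w τ := by
        rw [hg, abs_mul, abs_mul, abs_two, abs_of_pos (hwpos τ)]
      rw [he]
      exact mul_le_mul_of_nonneg_right (by linarith) (hwpos τ).le
    refine h2.trans ?_
    have hs1 : Real.sqrt (|p| / 2) ^ 2 = |p| / 2 := Real.sq_sqrt (by positivity)
    have hs2 : Real.sqrt (2 / |p|) ^ 2 = 2 / |p| := Real.sq_sqrt (by positivity)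
    have hs3 : Real.sqrt (|p| / 2) * Real.sqrt (2 / |p|) = 1 := by
      rw [← Real.sqrt_mul (by positivity)]
      rw [show |p| / 2 * (2 / |p|) = 1 by field_simp]
      exact Real.sqrt_one
    have key : 2 * (‖deriv u τ‖ * ‖u τ‖) ≤
        |p| / 2 * ‖u τ‖ ^ 2 + 2 / |p| * ‖deriv u τ‖ ^ 2 := by
      have hsqn := sq_nonneg (Real.sqrt (|p| / 2) * ‖u τ‖ - Real.sqrt (2 / |p|) * ‖deriv u τ‖)
      rw [sub_sq, mul_pow, mul_pow, hs1, hs2] at hsqn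
      have hmid : 2 * (Real.sqrt (|p| / 2) * ‖u τ‖) * (Real.sqrt (2 / |p|) * ‖deriv u τ‖)
          = 2 * (‖deriv u τ‖ * ‖u τ‖) := by
        rw [show 2 * (Real.sqrt (|p| / 2) * ‖u τ‖) * (Real.sqrt (2 / |p|) * ‖deriv u τ‖)
            = 2 * (Real.sqrt (|p| / 2) * Real.sqrt (2 / |p|)) * (‖u τ‖ * ‖deriv u τ‖) from by
          ring, hs3]
        ring
      rw [hmid] at hsqn
      linarith
    have := mul_le_mul_of_nonneg_right key (hwpos τ).le
    simp only [ha, hc]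
    nlinarith [this]
  have hbound : |p| * A ≤ |p| / 2 * A + 2 / |p| * B := by
    calc |p| * A = |p * A| := by rw [abs_mul, abs_of_nonneg hA0]
      _ = |∫ τ, g τ| := by rw [hkey]
      _ ≤ ∫ τ, |g τ| := by
          simpa using norm_integral_le_integral_norm g
      _ ≤ ∫ τ, (|p| / 2 * a τ + 2 / |p| * c τ) :=
          integral_mono hgint.abs
            ((haint.const_mul _).add (hcint.const_mul _)) hptwise
      _ = |p| / 2 * A + 2 / |p| * B := by
          rw [integral_add (haint.const_mul _) (hcint.const_mul _),
            integral_const_mul, integral_const_mul]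
  have hAB : A ≤ 4 / p ^ 2 * B := by
    have hstep : |p| * (|p| * A) ≤ |p| * (|p| / 2 * A + 2 / |p| * B) :=
      mul_le_mul_of_nonneg_left hbound hppos.le
    have hexp : |p| * (|p| / 2 * A + 2 / |p| * B) = |p| ^ 2 / 2 * A + 2 * B := by
      have h2p : |p| * (2 / |p|) = 2 := by field_simp
      calc |p| * (|p| / 2 * A + 2 / |p| * B)
          = |p| ^ 2 / 2 * A + |p| * (2 / |p|) * B := by ring
        _ = |p| ^ 2 / 2 * A + 2 * B := by rw [h2p]
    rw [hexp] at hstep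
    have hsq : p ^ 2 = |p| ^ 2 := (sq_abs p).symm
    rw [hsq, div_mul_eq_mul_div, le_div_iff₀ (by positivity)]
    nlinarith [hstep]
  have hmono : (∫ τ in Set.Ioi b, ‖u τ‖ ^ 2 * Real.exp (-(p + 2) * τ)) ≤
      Real.exp (-2 * b) * A := by
    calc (∫ τ in Set.Ioi b, ‖u τ‖ ^ 2 * Real.exp (-(p + 2) * τ))
        ≤ ∫ τ in Set.Ioi b, Real.exp (-2 * b) * a τ := by
          apply setIntegral_mono_on
          · have hint : Integrable (fun τ => ‖u τ‖ ^ 2 * Real.exp (-(p + 2) * τ)) := by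
              apply Continuous.integrable_of_hasCompactSupport (by fun_prop)
              exact (hcs.comp_left (g := fun z : ℂ => ‖z‖ ^ 2) (by simp)).mul_right
            exact hint.integrableOn
          · exact (haint.const_mul _).integrableOn
          · exact measurableSet_Ioi
          · intro τ hτ
            have hτb : b ≤ τ := le_of_lt hτ
            have hsplit : Real.exp (-(p + 2) * τ) = Real.exp (-2 * τ) * w τ := by
              rw [hw, ← Real.exp_add]
              ring_nf
            rw [hsplit]
            simp only [ha]
            have h1 : Real.exp (-2 * τ) ≤ Real.exp (-2 * b) :=
              Real.exp_le_exp.mpr (by linarith)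
            nlinarith [mul_le_mul_of_nonneg_left h1
              (mul_nonneg (sq_nonneg ‖u τ‖) (hwpos τ).le)]
      _ = Real.exp (-2 * b) * ∫ τ in Set.Ioi b, a τ := integral_const_mul _ _
      _ ≤ Real.exp (-2 * b) * A := by
          gcongr
          apply setIntegral_le_integral haint
          filter_upwards with τ
          simp only [ha]
          positivity
  calc (∫ τ in Set.Ioi b, ‖u τ‖ ^ 2 * Real.exp (-(p + 2) * τ))
      ≤ Real.exp (-2 * b) * A := hmono
    _ ≤ Real.exp (-2 * b) * (4 / p ^ 2 * B) := by gcongr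
    _ = 4 / p ^ 2 * Real.exp (-2 * b) * B := by ring
end
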